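/- arXiv:2202.05408 — 7 statements merged into one kernel-verified Lean document; each statement's English description precedes it below -/
import Mathlib

section
/- For a prime p, a positive integer k, and a ∈ ℤ_p ∩ ℚ, the p-adic valuation of the rising factorial (a)_k = a(a+1)⋯(a+k-1) equals the sum over i ≥ 1 of ⌊(k + p^i - [-a]_{i-1} - 1)/p^i⌋, where [-a]_{i-1} denotes the truncation of the p-adic expansion of -a to its first i digits (i.e., the unique integer in [0, p^i) congruent to -a modulo p^i). -/
/-!
Since `v_p` is additive, `v_p((a)_k) = ∑_{j<k} v_p(a + j) = ∑_{j<k} #{i ≥ 1 | p^i ∣ a + j}`.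
Swapping the two sums, the `i`-th term counts the `j < k` with `j ≡ -a ≡ [-a]_{i-1} (mod p^i)`,
and there are `⌈(k - r)/p^i⌉ = ⌊(k + p^i - r - 1)/p^i⌋` of them, where `r = [-a]_{i-1} < p^i`.
-/

/-- The rising factorial (Pochhammer symbol) `(a)_k = a(a+1)⋯(a+k-1)`. -/
def risingFact {R : Type*} [CommRing R] (a : R) (k : ℕ) : R :=
  ∏ i ∈ Finset.range k, (a + (i : R))

open Finset

theorem Int.floor_add_sub_one_div_eq_ceil (n : ℤ) {m : ℕ} (hm : 0 < m) :
    ⌊((n : ℚ) + m - 1) / m⌋ = ⌈(n : ℚ) / m⌉ := by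
  have hcast : (n : ℚ) + m - 1 = ((n + m - 1 : ℤ) : ℚ) := by push_cast; ring
  rw [hcast, Rat.floor_intCast_div_natCast, Rat.ceil_intCast_div_natCast]
  obtain ⟨q, s, hs0, hsm, hn⟩ : ∃ q s : ℤ, 0 ≤ s ∧ s < m ∧ -n = s + m * q :=
    ⟨-n / m, -n % m, Int.emod_nonneg _ (by omega), Int.emod_lt_of_pos _ (by omega),
      (Int.emod_add_mul_ediv _ _).symm⟩
  have hsplit : n + m - 1 = (m - 1 - s) + (-q) * m := by linarith
  rw [hn, hsplit, Int.add_mul_ediv_right _ _ (by omega), Int.add_mul_ediv_left _ _ (by omega),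
    Int.ediv_eq_zero_of_lt (by omega) (by omega), Int.ediv_eq_zero_of_lt hs0 hsm]
  ring

theorem Nat.card_filter_range_modEq (k : ℕ) {m r : ℕ} (hm : 0 < m) (hr : r < m) :
    (#{j ∈ range k | j ≡ r [MOD m]} : ℤ) = ⌊((k : ℚ) + m - r - 1) / m⌋ := by
  have hceil := Int.floor_add_sub_one_div_eq_ceil ((k : ℤ) - r) hm
  push_cast at hceil
  rw [← Nat.count_eq_card_filter_range, Nat.count_modEq_card_eq_ceil _ hm, Nat.mod_eq_of_lt hr,
    ← hceil]
  ring_nf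

theorem padicValRat.prod {p : ℕ} [Fact p.Prime] {ι : Type*} (s : Finset ι) (f : ι → ℚ)
    (hf : ∀ i ∈ s, f i ≠ 0) :
    padicValRat p (∏ i ∈ s, f i) = ∑ i ∈ s, padicValRat p (f i) := by
  induction s using Finset.cons_induction with
  | empty => simp
  | cons i s _ ih =>
    have hs : ∀ j ∈ s, f j ≠ 0 := fun j hj => hf j (mem_cons_of_mem hj)
    rw [prod_cons, sum_cons, padicValRat.mul (hf i (mem_cons_self i s)) (prod_ne_zero_iff.mpr hs),
      ih hs]

theorem Finset.tsum_card_filter_lt {ι : Type*} (s : Finset ι) (f : ι → ℕ) :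
    ∑' i : ℕ, (#{j ∈ s | i < f j} : ℤ) = ∑ j ∈ s, (f j : ℤ) := by
  have hle : ∀ j ∈ s, f j ≤ s.sup f := fun j hj => le_sup hj
  rw [tsum_eq_sum (s := range (s.sup f)) fun i hi => by
    simp only [mem_range, not_lt] at hi
    simpa using fun j hj => (hle j hj).trans hi]
  simp only [card_filter, Nat.cast_sum, Nat.cast_ite, Nat.cast_one, Nat.cast_zero]
  rw [sum_comm]
  refine sum_congr rfl fun j hj => ?_
  have hrange : {i ∈ range (s.sup f) | i < f j} = range (f j) := by
    ext i
    simp only [mem_filter, mem_range, and_iff_right_iff_imp]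
    exact fun hi => hi.trans_le (hle j hj)
  rw [sum_boole, hrange, card_range]

namespace PadicInt

variable {p : ℕ} [Fact p.Prime]

theorem toZModPow_apply (n : ℕ) (x : ℤ_[p]) : toZModPow n x = x.appr n := rfl

theorem modEq_appr_iff_sub_mem_span (x : ℤ_[p]) (j n : ℕ) :
    j ≡ x.appr n [MOD p ^ n] ↔ x - j ∈ Ideal.span {(p : ℤ_[p]) ^ n} := by
  rw [← ker_toZModPow, RingHom.mem_ker, map_sub, sub_eq_zero, map_natCast, toZModPow_apply,
    ZMod.natCast_eq_natCast_iff, Nat.ModEq.comm]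

theorem modEq_appr_iff_le_valuation (x : ℤ_[p]) (j n : ℕ) (hx : x - j ≠ 0) :
    j ≡ x.appr n [MOD p ^ n] ↔ n ≤ (x - j).valuation := by
  rw [modEq_appr_iff_sub_mem_span, mem_span_pow_iff_le_valuation _ hx]

theorem coe_sub_natCast_of_coe_eq_neg {x : ℤ_[p]} {a : ℚ} (hx : (x : ℚ_[p]) = -a) (j : ℕ) :
    ((x - j : ℤ_[p]) : ℚ_[p]) = ((-(a + j) : ℚ) : ℚ_[p]) := by
  push_cast [hx]
  ring

theorem valuation_sub_natCast_of_coe_eq_neg {x : ℤ_[p]} {a : ℚ} (hx : (x : ℚ_[p]) = -a)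
    (j : ℕ) : ((x - j).valuation : ℤ) = padicValRat p (a + j) := by
  rw [← valuation_coe, coe_sub_natCast_of_coe_eq_neg hx, Padic.valuation_ratCast, padicValRat.neg]

theorem sub_natCast_ne_zero_of_coe_eq_neg {x : ℤ_[p]} {a : ℚ} (hx : (x : ℚ_[p]) = -a) {j : ℕ}
    (hj : a + j ≠ 0) : x - j ≠ 0 := by
  rw [← coe_ne_zero, coe_sub_natCast_of_coe_eq_neg hx, Rat.cast_ne_zero, neg_ne_zero]
  exact hj

end PadicInt

theorem stmt0_general (p : ℕ) [Fact p.Prime] (k : ℕ) (a : ℚ)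
    (ha : ‖((-a : ℚ) : ℚ_[p])‖ ≤ 1)
    (hnz : ∀ j < k, a + (j : ℚ) ≠ 0) :
    (padicValRat p (risingFact a k) : ℤ) =
      ∑' i : ℕ,
        ⌊((k : ℚ) + (p : ℚ) ^ (i + 1)
            - ((PadicInt.appr (⟨((-a : ℚ) : ℚ_[p]), ha⟩ : ℤ_[p]) (i + 1) : ℕ) : ℚ) - 1) / (p : ℚ) ^ (i + 1)⌋ := by
  set x : ℤ_[p] := ⟨((-a : ℚ) : ℚ_[p]), ha⟩
  have hx : (x : ℚ_[p]) = -a := Rat.cast_neg a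
  calc (padicValRat p (risingFact a k) : ℤ)
      = ∑ j ∈ range k, ((x - j).valuation : ℤ) := by
        rw [risingFact, padicValRat.prod _ _ fun j hj => hnz j (mem_range.mp hj)]
        simp only [PadicInt.valuation_sub_natCast_of_coe_eq_neg hx]
    _ = ∑' i : ℕ, (#{j ∈ range k | i < (x - (j : ℕ)).valuation} : ℤ) :=
        (tsum_card_filter_lt _ _).symm
    _ = _ := tsum_congr fun i => by
        have hpow : 0 < p ^ (i + 1) := pow_pos (Fact.out : p.Prime).pos _
        rw [← Nat.cast_pow, ← Nat.card_filter_range_modEq k hpow (x.appr_lt (i + 1))]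
        congr 2
        refine filter_congr fun j hj => ?_
        rw [PadicInt.modEq_appr_iff_le_valuation x j (i + 1)
          (PadicInt.sub_natCast_ne_zero_of_coe_eq_neg hx (hnz j (mem_range.mp hj)))]
        exact Nat.succ_le_iff.symm

/-- For a prime `p`, a positive integer `k`, and a `p`-adically integral rational `a`
(such that `(a)_k ≠ 0`), the `p`-adic valuation of the rising factorial `(a)_k` equals
`∑_{i ≥ 1} ⌊(k + p^i - [-a]_{i-1} - 1)/p^i⌋`, where `[-a]_{i-1}` is the truncation of the
`p`-adic expansion of `-a` to its first `i` digits. -/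
theorem stmt0 (p : ℕ) [Fact p.Prime] (k : ℕ) (hk : 0 < k) (a : ℚ)
    (ha : ‖((-a : ℚ) : ℚ_[p])‖ ≤ 1)
    (hnz : ∀ j < k, a + (j : ℚ) ≠ 0) :
    (padicValRat p (risingFact a k) : ℤ) =
      ∑' i : ℕ,
        ⌊((k : ℚ) + (p : ℚ) ^ (i + 1)
            - ((PadicInt.appr (⟨((-a : ℚ) : ℚ_[p]), ha⟩ : ℤ_[p]) (i + 1) : ℕ) : ℚ) - 1) / (p : ℚ) ^ (i + 1)⌋ :=
  stmt0_general p k a ha hnz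
end

section
/- Let p be a prime, k a nonnegative integer with k = a + bp where a = [k]_0 ∈ {0,...,p-1} and b = (k-a)/p. Then for any r ∈ ℤ_p, (r)_k / (1)_k = (-Γ_p(r+k) / (Γ_p(1+k)Γ_p(r))) · ((r')_b / (1)_b) · ((r'+b)p)^{ν(a, [-r]_0)}, where r' = (r + [-r]_0)/p is the Dwork dash of r, and ν(a,x) = 0 if a ≤ x and ν(a,x) = 1 if x < a < p. -/
def natAsc (n k : ℕ) : ℕ := ∏ i ∈ Finset.range k, (n + i)

def Wn (p N : ℕ) : ℕ := ∏ i ∈ (Finset.Ico 1 N).filter (fun i => ¬ p ∣ i), i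

lemma Wn_succ (p N : ℕ) : Wn p (N + 1) = Wn p N * (if p ∣ N then 1 else N) := by
  unfold Wn
  rw [Finset.prod_filter, Finset.prod_filter]
  rcases Nat.eq_zero_or_pos N with h | h
  · subst h; simp
  · rw [Finset.prod_Ico_succ_top h]
    congr 1
    split_ifs <;> simp_all

lemma fact_eq (p : ℕ) (hp : 0 < p) (N : ℕ) :
    N.factorial = Wn p (N + 1) * p ^ (N / p) * (N / p).factorial := by
  induction N with
  | zero => simp [Wn]
  | succ N ih =>
    rw [Nat.factorial_succ, ih, Wn_succ p (N+1), Nat.succ_div]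
    by_cases h : p ∣ N + 1
    · have h2 : p * (N / p + 1) = N + 1 := by
        have := Nat.mul_div_cancel' h
        rwa [Nat.succ_div, if_pos h] at this
      simp only [if_pos h]
      nth_rewrite 1 [← h2]
      rw [pow_succ, Nat.factorial_succ]
      ring
    · simp only [if_neg h, add_zero]
      ring

lemma natAsc_fact (n k : ℕ) (hn : 1 ≤ n) :
    natAsc n k * (n - 1).factorial = (n + k - 1).factorial := by
  induction k with
  | zero => simp [natAsc]
  | succ k ih =>
    have h1 : natAsc n (k + 1) = natAsc n k * (n + k) := by
      unfold natAsc; rw [Finset.prod_range_succ]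
    have h2 : (n + (k+1) - 1) = (n + k - 1) + 1 := by omega
    have h3 : n + k - 1 + 1 = n + k := by omega
    rw [h1, h2, Nat.factorial_succ, h3, mul_comm (natAsc n k), mul_assoc, ih]

lemma div_split (p n k c m : ℕ) (hp : 1 < p) (hn : 1 ≤ n) (hc : c < p)
    (hm : p * m = n + c) :
    1 ≤ m ∧ (n - 1) / p = m - 1 ∧
      (n + k - 1) / p = (m - 1) + k / p + (if c < k % p then 1 else 0) := by
  have hm1 : 1 ≤ m := by
    rcases Nat.eq_zero_or_pos m with h | h
    · subst h; omega
    · exact h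
  have ha : k % p < p := Nat.mod_lt _ (by omega)
  have hk : p * (k / p) + k % p = k := Nat.div_add_mod k p
  set e := k / p with he
  set a := k % p with hb
  have hmz : (p : ℤ) * m = n + c := by exact_mod_cast hm
  have hkz : (p : ℤ) * e + a = k := by exact_mod_cast hk
  have key1 : n - 1 = (p - 1 - c) + p * (m - 1) := by
    zify [hn, hm1, (by omega : 1 ≤ p), (by omega : c ≤ p - 1)]
    linear_combination -hmz
  have key2 : n + k - 1 = ((p - 1 - c) + a) + p * ((m - 1) + e) := by
    zify [hm1, (by omega : 1 ≤ p), (by omega : c ≤ p - 1), (by omega : 1 ≤ n + k)]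
    linear_combination -hmz - hkz
  refine ⟨hm1, ?_, ?_⟩
  · rw [key1, Nat.add_mul_div_left _ _ (by omega : 0 < p),
      Nat.div_eq_of_lt (by omega), zero_add]
  · rw [key2, Nat.add_mul_div_left _ _ (by omega : 0 < p)]
    by_cases h : c < a
    · rw [if_pos h]
      have h2 : (p - 1 - c) + a = (a - c - 1) + p := by omega
      rw [h2, Nat.add_div_right _ (by omega : 0 < p),
        Nat.div_eq_of_lt (by omega)]
      omega
    · rw [if_neg h, Nat.div_eq_of_lt (by omega)]
      omega

lemma key_nat (p n k c : ℕ) (hp : 1 < p) (hn : 1 ≤ n) (hc : c < p) (hd : p ∣ n + c) :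
    natAsc n k * Wn p (1 + k) * Wn p n * (k / p).factorial * p ^ (k / p)
      = Wn p (n + k) * (∏ i ∈ Finset.range (k / p), (n + c + p * i)) *
        (if c < k % p then n + c + (k / p) * p else 1) * k.factorial := by
  obtain ⟨m, hm⟩ := hd
  have hm' : p * m = n + c := hm.symm
  obtain ⟨hm1, hB, hA⟩ := div_split p n k c m hp hn hc hm'
  set b := k / p with hbdef
  set a := k % p with hadef
  set A := (n + k - 1) / p with hAdef
  clear_value b a A
  have prodeq : ∏ i ∈ Finset.range b, (n + c + p * i) = p ^ b * natAsc m b := by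
    calc ∏ i ∈ Finset.range b, (n + c + p * i)
        = ∏ i ∈ Finset.range b, (p * (m + i)) :=
          Finset.prod_congr rfl fun i _ => by rw [← hm']; ring
      _ = p ^ b * natAsc m b := by
          rw [Finset.prod_mul_distrib, Finset.prod_const, Finset.card_range]; rfl
  have h4 : natAsc n k * (n - 1).factorial = (n + k - 1).factorial := natAsc_fact n k hn
  have h5 : natAsc m b * (m - 1).factorial = (m + b - 1).factorial := natAsc_fact m b hm1
  have hFk : k.factorial = Wn p (k + 1) * p ^ b * b.factorial := by
    rw [hbdef]; exact fact_eq p (by omega) k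
  have hFA : (n + k - 1).factorial = Wn p (n + k) * p ^ A * A.factorial := by
    rw [hAdef]
    have := fact_eq p (by omega) (n + k - 1)
    rwa [show n + k - 1 + 1 = n + k by omega] at this
  have hFn : (n - 1).factorial = Wn p n * p ^ (m - 1) * (m - 1).factorial := by
    have := fact_eq p (by omega) (n - 1)
    rwa [show n - 1 + 1 = n by omega, hB] at this
  have hW : Wn p (1 + k) = Wn p (k + 1) := by rw [add_comm]
  refine Nat.eq_of_mul_eq_mul_right (Nat.factorial_pos (n - 1)) ?_
  rw [prodeq]
  by_cases h : c < a
  · rw [if_pos h] at hA ⊢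
    have hAval : A = m + b := by omega
    have hAfact : A.factorial = (m + b) * (natAsc m b * (m - 1).factorial) := by
      rw [h5, hAval, show m + b = (m + b - 1) + 1 by omega, Nat.factorial_succ,
        show m + b - 1 + 1 = m + b by omega]
    have hApow : p ^ A = p ^ (m - 1) * p ^ b * p := by
      rw [hAval, show m + b = (m - 1) + b + 1 by omega, pow_succ, pow_add]
    have hifv : n + c + b * p = (m + b) * p := by rw [← hm']; ring
    calc natAsc n k * Wn p (1 + k) * Wn p n * b.factorial * p ^ b * (n - 1).factorial
        = (natAsc n k * (n - 1).factorial) * (Wn p (1 + k) * Wn p n * b.factorial * p ^ b) := by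
          ring
      _ = Wn p (n + k) * (p ^ (m - 1) * p ^ b * p) *
            ((m + b) * (natAsc m b * (m - 1).factorial)) *
            (Wn p (k + 1) * Wn p n * b.factorial * p ^ b) := by
          rw [h4, hFA, hAfact, hApow, hW]
      _ = Wn p (n + k) * (p ^ b * natAsc m b) * ((m + b) * p) *
            (Wn p (k + 1) * p ^ b * b.factorial) *
            (Wn p n * p ^ (m - 1) * (m - 1).factorial) := by ring
      _ = Wn p (n + k) * (p ^ b * natAsc m b) * (n + c + b * p) * k.factorial *
            (n - 1).factorial := by rw [hifv, hFk, hFn]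
  · rw [if_neg h] at hA ⊢
    have hAval : A = (m - 1) + b := by omega
    have hAfact : A.factorial = natAsc m b * (m - 1).factorial := by
      rw [h5, hAval, show m - 1 + b = m + b - 1 by omega]
    have hApow : p ^ A = p ^ (m - 1) * p ^ b := by rw [hAval, pow_add]
    calc natAsc n k * Wn p (1 + k) * Wn p n * b.factorial * p ^ b * (n - 1).factorial
        = (natAsc n k * (n - 1).factorial) * (Wn p (1 + k) * Wn p n * b.factorial * p ^ b) := by
          ring
      _ = Wn p (n + k) * (p ^ (m - 1) * p ^ b) * (natAsc m b * (m - 1).factorial) *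
            (Wn p (k + 1) * Wn p n * b.factorial * p ^ b) := by
          rw [h4, hFA, hAfact, hApow, hW]
      _ = Wn p (n + k) * (p ^ b * natAsc m b) * 1 *
            (Wn p (k + 1) * p ^ b * b.factorial) *
            (Wn p n * p ^ (m - 1) * (m - 1).factorial) := by ring
      _ = Wn p (n + k) * (p ^ b * natAsc m b) * 1 * k.factorial * (n - 1).factorial := by
          rw [hFk, hFn]
  -- goal uses prodeq

lemma key_cast (p : ℕ) [Fact p.Prime] (Gp : ℤ_[p] → ℤ_[p])
    (hval : ∀ n : ℕ, 0 < n →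
      Gp (n : ℤ_[p]) = (-1) ^ n * ∏ i ∈ (Finset.Ico 1 n).filter (fun i => ¬ p ∣ i), (i : ℤ_[p]))
    (k n c : ℕ) (hn : 1 ≤ n) (hc : c < p) (hd : p ∣ n + c) :
    risingFact (n : ℤ_[p]) k * Gp (1 + (k : ℤ_[p])) * Gp (n : ℤ_[p]) *
        ((k / p).factorial : ℤ_[p]) * (p : ℤ_[p]) ^ (k / p)
      = -(Gp ((n : ℤ_[p]) + (k : ℤ_[p]))) *
          (∏ i ∈ Finset.range (k / p), ((n : ℤ_[p]) + (c : ℤ_[p]) + (p : ℤ_[p]) * (i : ℤ_[p]))) *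
          (if c < k % p then ((n : ℤ_[p]) + (c : ℤ_[p]) + ((k / p : ℕ) : ℤ_[p]) * (p : ℤ_[p]))
            else 1) * (k.factorial : ℤ_[p]) := by
  have hp : 1 < p := (Fact.out : p.Prime).one_lt
  have hG : ∀ N : ℕ, 0 < N → Gp (N : ℤ_[p]) = (-1) ^ N * ((Wn p N : ℕ) : ℤ_[p]) := by
    intro N hN
    rw [hval N hN]
    congr 1
    unfold Wn
    push_cast
    rfl
  have mainZ : ((natAsc n k : ℕ) : ℤ_[p]) * ((Wn p (1 + k) : ℕ) : ℤ_[p]) *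
      ((Wn p n : ℕ) : ℤ_[p]) * ((k / p).factorial : ℤ_[p]) * (p : ℤ_[p]) ^ (k / p)
      = ((Wn p (n + k) : ℕ) : ℤ_[p]) *
          (∏ i ∈ Finset.range (k / p), ((n : ℤ_[p]) + (c : ℤ_[p]) + (p : ℤ_[p]) * (i : ℤ_[p]))) *
          (if c < k % p then ((n : ℤ_[p]) + (c : ℤ_[p]) + ((k / p : ℕ) : ℤ_[p]) * (p : ℤ_[p]))
            else 1) * (k.factorial : ℤ_[p]) := by
    have h0 := congrArg (fun t : ℕ => (t : ℤ_[p])) (key_nat p n k c hp hn hc hd)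
    push_cast [apply_ite (fun t : ℕ => (t : ℤ_[p]))] at h0
    convert h0 using 2
  have hrf : risingFact (n : ℤ_[p]) k = ((natAsc n k : ℕ) : ℤ_[p]) := by
    unfold risingFact natAsc
    push_cast
    rfl
  rw [show ((1 : ℤ_[p]) + (k : ℤ_[p])) = (((1 + k : ℕ) : ℤ_[p])) by push_cast; ring,
    show ((n : ℤ_[p]) + (k : ℤ_[p])) = (((n + k : ℕ) : ℤ_[p])) by push_cast; ring,
    hG (1 + k) (by omega), hG n hn, hG (n + k) (by omega), hrf]
  by_cases hcnd : c < k % p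
  · rw [if_pos hcnd] at mainZ ⊢
    linear_combination (-(-1 : ℤ_[p]) ^ (n + k)) * mainZ
  · rw [if_neg hcnd] at mainZ ⊢
    linear_combination (-(-1 : ℤ_[p]) ^ (n + k)) * mainZ

/-- Let `p` be a prime, `k = a + bp` with `a = [k]₀ ∈ {0,...,p-1}` and `b = (k-a)/p`.  For any
`r ∈ ℤ_p`, with `r'` the Dwork dash of `r` (so `p·r' = r + [-r]₀`),
`(r)_k / (1)_k = (-Γ_p(r+k)/(Γ_p(1+k)Γ_p(r))) · ((r')_b/(1)_b) · ((r'+b)p)^{ν(a,[-r]₀)}`,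
where `ν(a,x) = 1` if `x < a` and `0` otherwise.  (Stated multiplied out in `ℤ_p`.) -/
theorem stmt6 (p : ℕ) [Fact p.Prime]
    (Gp : ℤ_[p] → ℤ_[p]) (hcont : Continuous Gp)
    (hval : ∀ n : ℕ, 0 < n →
      Gp (n : ℤ_[p]) = (-1) ^ n * ∏ i ∈ (Finset.Ico 1 n).filter (fun i => ¬ p ∣ i), (i : ℤ_[p]))
    (k : ℕ) (r r' : ℤ_[p])
    (hr' : (p : ℤ_[p]) * r' = r + (((-r).appr 1 : ℕ) : ℤ_[p])) :
    risingFact r k * Gp (1 + (k : ℤ_[p])) * Gp r * ((k / p).factorial : ℤ_[p]) =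
      -(Gp (r + (k : ℤ_[p]))) * risingFact r' (k / p) *
        (if (-r).appr 1 < k % p then (r' + ((k / p : ℕ) : ℤ_[p])) * (p : ℤ_[p]) else 1) *
        (k.factorial : ℤ_[p]) := by
  have hp : 1 < p := (Fact.out : p.Prime).one_lt
  set c := (-r).appr 1 with hcdef
  have hc : c < p := by
    have := PadicInt.appr_lt (-r) 1
    simpa using this
  -- the approximating sequence
  set N : ℕ → ℕ := fun j => r.appr (j + 1) + p ^ (j + 1) with hN
  have hmemS : ∀ j, ((N j : ℕ) : ℤ_[p]) - r ∈ Ideal.span {((p : ℤ_[p])) ^ (j + 1)} := by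
    intro j
    have h1 := PadicInt.appr_spec (j + 1) r
    have h2 : ((p : ℤ_[p])) ^ (j + 1) ∈ Ideal.span {((p : ℤ_[p])) ^ (j + 1)} :=
      Ideal.mem_span_singleton.2 dvd_rfl
    have h3 : ((N j : ℕ) : ℤ_[p]) - r
        = -(r - ((r.appr (j + 1) : ℕ) : ℤ_[p])) + ((p : ℤ_[p])) ^ (j + 1) := by
      push_cast [hN]; ring
    rw [h3]
    exact Ideal.add_mem _ (neg_mem h1) h2
  have htend : Filter.Tendsto (fun j => ((N j : ℕ) : ℤ_[p])) Filter.atTop (nhds r) := by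
    rw [tendsto_iff_dist_tendsto_zero]
    have hbnd : ∀ j, dist ((N j : ℕ) : ℤ_[p]) r ≤ ((p : ℝ)⁻¹) ^ (j + 1) := by
      intro j
      have := (PadicInt.norm_le_pow_iff_mem_span_pow _ (j + 1)).2 (hmemS j)
      rw [dist_eq_norm]
      calc ‖((N j : ℕ) : ℤ_[p]) - r‖ ≤ (p : ℝ) ^ (-((j : ℤ) + 1)) := by exact_mod_cast this
        _ = ((p : ℝ)⁻¹) ^ (j + 1) := by
            rw [zpow_neg, ← inv_zpow]
            norm_cast
    refine squeeze_zero (fun j => dist_nonneg) hbnd ?_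
    have h0 : (0:ℝ) ≤ (p : ℝ)⁻¹ := by positivity
    have h1 : (p : ℝ)⁻¹ < 1 := by
      rw [inv_lt_one_iff₀]; right; exact_mod_cast hp
    exact (tendsto_pow_atTop_nhds_zero_of_lt_one h0 h1).comp (Filter.tendsto_add_atTop_nat 1)
  have hNdvd : ∀ j, p ∣ N j + c := by
    intro j
    have hS : ((N j + c : ℕ) : ℤ_[p]) ∈ Ideal.span {(p : ℤ_[p])} := by
      have h1 : ((N j : ℕ) : ℤ_[p]) - r ∈ Ideal.span {(p : ℤ_[p])} := by
        refine Ideal.span_singleton_le_span_singleton.mpr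
          (dvd_pow_self (p : ℤ_[p]) (Nat.succ_ne_zero j)) (hmemS j)
      have h2 : r + ((c : ℕ) : ℤ_[p]) ∈ Ideal.span {(p : ℤ_[p])} :=
        Ideal.mem_span_singleton.2 ⟨r', hr'.symm⟩
      have h3 : ((N j + c : ℕ) : ℤ_[p]) = (((N j : ℕ) : ℤ_[p]) - r) + (r + ((c : ℕ) : ℤ_[p])) := by
        push_cast; ring
      rw [h3]
      exact Ideal.add_mem _ h1 h2
    have h4 : PadicInt.toZMod ((N j + c : ℕ) : ℤ_[p]) = 0 := by
      rw [← RingHom.mem_ker, PadicInt.ker_toZMod, PadicInt.maximalIdeal_eq_span_p]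
      exact hS
    rw [map_natCast] at h4
    exact (ZMod.natCast_eq_zero_iff _ p).mp h4
  have cF : Continuous (fun x : ℤ_[p] => risingFact x k * Gp (1 + (k : ℤ_[p])) * Gp x *
      ((k / p).factorial : ℤ_[p]) * (p : ℤ_[p]) ^ (k / p)) := by
    have h1 : Continuous (fun x : ℤ_[p] => risingFact x k) := by
      unfold risingFact
      exact continuous_finset_prod _ (fun i _ => continuous_id.add continuous_const)
    exact (((h1.mul continuous_const).mul hcont).mul continuous_const).mul continuous_const
  have cG : Continuous (fun x : ℤ_[p] => -(Gp (x + (k : ℤ_[p]))) *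
      (∏ i ∈ Finset.range (k / p), (x + (c : ℤ_[p]) + (p : ℤ_[p]) * (i : ℤ_[p]))) *
      (if c < k % p then (x + (c : ℤ_[p]) + ((k / p : ℕ) : ℤ_[p]) * (p : ℤ_[p])) else 1) *
      (k.factorial : ℤ_[p])) := by
    have h1 : Continuous (fun x : ℤ_[p] => -(Gp (x + (k : ℤ_[p])))) :=
      (hcont.comp (continuous_id.add continuous_const)).neg
    have h2 : Continuous (fun x : ℤ_[p] =>
        ∏ i ∈ Finset.range (k / p), (x + (c : ℤ_[p]) + (p : ℤ_[p]) * (i : ℤ_[p]))) :=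
      continuous_finset_prod _ (fun i _ =>
        (continuous_id.add continuous_const).add continuous_const)
    have h3 : Continuous (fun x : ℤ_[p] =>
        (if c < k % p then (x + (c : ℤ_[p]) + ((k / p : ℕ) : ℤ_[p]) * (p : ℤ_[p])) else 1)) := by
      split_ifs
      · exact (continuous_id.add continuous_const).add continuous_const
      · exact continuous_const
    exact ((h1.mul h2).mul h3).mul continuous_const
  have heq : ∀ j, risingFact ((N j : ℕ) : ℤ_[p]) k * Gp (1 + (k : ℤ_[p])) *
      Gp ((N j : ℕ) : ℤ_[p]) * ((k / p).factorial : ℤ_[p]) * (p : ℤ_[p]) ^ (k / p)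
      = -(Gp (((N j : ℕ) : ℤ_[p]) + (k : ℤ_[p]))) *
        (∏ i ∈ Finset.range (k / p),
          (((N j : ℕ) : ℤ_[p]) + (c : ℤ_[p]) + (p : ℤ_[p]) * (i : ℤ_[p]))) *
        (if c < k % p then (((N j : ℕ) : ℤ_[p]) + (c : ℤ_[p]) + ((k / p : ℕ) : ℤ_[p]) * (p : ℤ_[p]))
          else 1) * (k.factorial : ℤ_[p]) := fun j =>
    key_cast p Gp hval k (N j) c (by
      simp only [hN]
      exact le_trans (Nat.one_le_pow _ _ (by omega)) (Nat.le_add_left _ _)) hc (hNdvd j)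
  have main : risingFact r k * Gp (1 + (k : ℤ_[p])) * Gp r *
      ((k / p).factorial : ℤ_[p]) * (p : ℤ_[p]) ^ (k / p)
      = -(Gp (r + (k : ℤ_[p]))) *
        (∏ i ∈ Finset.range (k / p), (r + (c : ℤ_[p]) + (p : ℤ_[p]) * (i : ℤ_[p]))) *
        (if c < k % p then (r + (c : ℤ_[p]) + ((k / p : ℕ) : ℤ_[p]) * (p : ℤ_[p])) else 1) *
        (k.factorial : ℤ_[p]) := by
    refine tendsto_nhds_unique ((cF.tendsto r).comp htend) ?_
    have hfg : ((fun x : ℤ_[p] => risingFact x k * Gp (1 + (k : ℤ_[p])) * Gp x *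
        ((k / p).factorial : ℤ_[p]) * (p : ℤ_[p]) ^ (k / p)) ∘ (fun j => ((N j : ℕ) : ℤ_[p])))
        = ((fun x : ℤ_[p] => -(Gp (x + (k : ℤ_[p]))) *
          (∏ i ∈ Finset.range (k / p), (x + (c : ℤ_[p]) + (p : ℤ_[p]) * (i : ℤ_[p]))) *
          (if c < k % p then (x + (c : ℤ_[p]) + ((k / p : ℕ) : ℤ_[p]) * (p : ℤ_[p])) else 1) *
          (k.factorial : ℤ_[p])) ∘ (fun j => ((N j : ℕ) : ℤ_[p]))) := funext fun j => heq j
    rw [hfg]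
    exact (cG.tendsto r).comp htend
  -- conclude
  have hpne : ((p : ℤ_[p])) ^ (k / p) ≠ 0 :=
    pow_ne_zero _ (by exact_mod_cast (Fact.out : p.Prime).ne_zero)
  apply mul_right_cancel₀ hpne
  have hprd : risingFact r' (k / p) * (p : ℤ_[p]) ^ (k / p)
      = ∏ i ∈ Finset.range (k / p), (r + (c : ℤ_[p]) + (p : ℤ_[p]) * (i : ℤ_[p])) := by
    unfold risingFact
    rw [show ((p : ℤ_[p])) ^ (k / p) = ∏ _i ∈ Finset.range (k / p), (p : ℤ_[p]) by
      rw [Finset.prod_const, Finset.card_range], ← Finset.prod_mul_distrib]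
    exact Finset.prod_congr rfl fun i _ => by linear_combination hr'
  have hif : (if c < k % p then (r' + ((k / p : ℕ) : ℤ_[p])) * (p : ℤ_[p]) else 1)
      = (if c < k % p then (r + (c : ℤ_[p]) + ((k / p : ℕ) : ℤ_[p]) * (p : ℤ_[p])) else 1) := by
    split_ifs
    · linear_combination hr'
    · rfl
  calc risingFact r k * Gp (1 + (k : ℤ_[p])) * Gp r * ((k / p).factorial : ℤ_[p]) *
        (p : ℤ_[p]) ^ (k / p)
      = -(Gp (r + (k : ℤ_[p]))) *
        (∏ i ∈ Finset.range (k / p), (r + (c : ℤ_[p]) + (p : ℤ_[p]) * (i : ℤ_[p]))) *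
        (if c < k % p then (r + (c : ℤ_[p]) + ((k / p : ℕ) : ℤ_[p]) * (p : ℤ_[p])) else 1) *
        (k.factorial : ℤ_[p]) := main
    _ = -(Gp (r + (k : ℤ_[p]))) * risingFact r' (k / p) *
        (if c < k % p then (r' + ((k / p : ℕ) : ℤ_[p])) * (p : ℤ_[p]) else 1) *
        (k.factorial : ℤ_[p]) * (p : ℤ_[p]) ^ (k / p) := by
        rw [hif, ← hprd]; ring
end

section
/- Let p ≥ 7 be a prime, q ∈ {4/3, 7/6, 5/4}, and β = {1, 1, q, 2-q}. Then the multiset of Dwork dashes β' = {1', 1', q', (2-q)'} equals {1, 1, q-1, 2-q} as multisets. -/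
/-- The Dwork dash operation `x ↦ (x + [-x]₀)/p`, valued in `ℚ_p`. -/
noncomputable def dwork (p : ℕ) [Fact p.Prime] (x : ℤ_[p]) : ℚ_[p] :=
  ((x : ℚ_[p]) + (((-x).appr 1 : ℕ) : ℚ_[p])) / (p : ℚ_[p])

/-!
If `x + n = p c` with `0 ≤ n < p`, then `n` is the first digit of `-x` and so `x' = c`.
For `q = 1 + s` with `s (p - 1) = k` a positive integer below `p` this gives `q' = s` and
`(2 - q)' = 1 - s` (digits `k - 1` and `p - 1 - k`); when instead `s (p + 1) = k`, the same
digits swap the two values. For `s = 1/d` with `d ∈ {3, 4, 6}` one of the two cases occurs,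
because every prime `p ≥ 5` is `±1` modulo `d`.
-/

namespace PadicInt

variable {p : ℕ} [Fact p.Prime]

theorem appr_one_eq_of_sub_mem_span {x : ℤ_[p]} {n : ℕ} (hn : n < p)
    (h : x - n ∈ Ideal.span {(p : ℤ_[p])}) : x.appr 1 = n := by
  have happr : x - x.appr 1 ∈ IsLocalRing.maximalIdeal ℤ_[p] := by
    simpa [maximalIdeal_eq_span_p] using appr_spec 1 x
  rw [← maximalIdeal_eq_span_p] at h
  rw [← zmodRepr_unique x _ (by simpa using appr_lt x 1) happr, zmodRepr_unique x n hn h]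

end PadicInt

section DworkDash

variable {p : ℕ} [Fact p.Prime]

theorem dwork_eq_of_add_eq_mul {x c : ℤ_[p]} {n : ℕ} (hn : n < p)
    (h : (x : ℚ_[p]) + n = p * c) : dwork p x = c := by
  have hdigit : (-x).appr 1 = n := by
    refine PadicInt.appr_one_eq_of_sub_mem_span hn (Ideal.mem_span_singleton'.mpr ⟨-c, ?_⟩)
    apply PadicInt.ext
    push_cast
    linear_combination h
  have hp : (p : ℚ_[p]) ≠ 0 := Nat.cast_ne_zero.mpr (Fact.out : p.Prime).ne_zero
  rw [dwork, hdigit, h, mul_div_cancel_left₀ _ hp]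

theorem dwork_one : dwork p 1 = 1 := by
  have hp := (Fact.out : p.Prime).one_lt
  rw [dwork_eq_of_add_eq_mul (c := 1) (show p - 1 < p by omega), PadicInt.coe_one]
  push_cast [Nat.cast_sub hp.le]
  ring

theorem dwork_pair_eq_of_mul_eq_natCast {x y : ℤ_[p]} {q : ℚ} {k : ℕ} (hk0 : 0 < k)
    (hkp : k < p) (hk : (q - 1) * (p - 1) = k ∨ (q - 1) * (p + 1) = k)
    (hx : (x : ℚ_[p]) = (q : ℚ_[p])) (hy : (y : ℚ_[p]) = ((2 - q : ℚ) : ℚ_[p])) :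
    ({dwork p x, dwork p y} : Multiset ℚ_[p]) =
      {((q - 1 : ℚ) : ℚ_[p]), ((2 - q : ℚ) : ℚ_[p])} := by
  have hx' : ((x - 1 : ℤ_[p]) : ℚ_[p]) = ((q - 1 : ℚ) : ℚ_[p]) := by push_cast [hx]; rfl
  have hcast (a b : ℚ) (n : ℕ) (h : a + n = p * b) : (a : ℚ_[p]) + n = p * (b : ℚ_[p]) := by
    exact_mod_cast congrArg ((↑) : ℚ → ℚ_[p]) h
  have hk1 : ((k - 1 : ℕ) : ℚ) = k - 1 := Nat.cast_sub hk0
  have hpk : ((p - 1 - k : ℕ) : ℚ) = p - 1 - k := by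
    rw [Nat.cast_sub (by omega), Nat.cast_sub (by omega), Nat.cast_one]
  rcases hk with hk | hk
  · have hdx : dwork p x = ((q - 1 : ℚ) : ℚ_[p]) := by
      rw [← hx', dwork_eq_of_add_eq_mul (n := k - 1) (by omega)]
      rw [hx, hx']; apply hcast; rw [hk1]; linear_combination -hk
    have hdy : dwork p y = ((2 - q : ℚ) : ℚ_[p]) := by
      rw [← hy, dwork_eq_of_add_eq_mul (n := p - 1 - k) (by omega)]
      rw [hy]; apply hcast; rw [hpk]; linear_combination hk
    rw [hdx, hdy]
  · have hdx : dwork p x = ((2 - q : ℚ) : ℚ_[p]) := by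
      rw [← hy, dwork_eq_of_add_eq_mul (n := p - 1 - k) (by omega)]
      rw [hx, hy]; apply hcast; rw [hpk]; linear_combination hk
    have hdy : dwork p y = ((q - 1 : ℚ) : ℚ_[p]) := by
      rw [← hx', dwork_eq_of_add_eq_mul (n := k - 1) (by omega)]
      rw [hy, hx']; apply hcast; rw [hk1]; linear_combination -hk
    rw [hdx, hdy, Multiset.pair_comm]

theorem dwork_pair_eq_of_dvd {x y : ℤ_[p]} {q : ℚ} {d : ℕ} (hd : d ∣ p - 1 ∨ d ∣ p + 1)
    (hqd : (q - 1) * d = 1)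
    (hx : (x : ℚ_[p]) = (q : ℚ_[p])) (hy : (y : ℚ_[p]) = ((2 - q : ℚ) : ℚ_[p])) :
    ({dwork p x, dwork p y} : Multiset ℚ_[p]) =
      {((q - 1 : ℚ) : ℚ_[p]), ((2 - q : ℚ) : ℚ_[p])} := by
  have hp := (Fact.out : p.Prime).two_le
  by_cases hd1 : d ∣ p - 1
  · obtain ⟨m, hm⟩ := hd1
    have hm0 : 0 < m := Nat.pos_of_ne_zero (by rintro rfl; omega)
    have hmp : m < p := by
      have : m ≤ d * m := Nat.le_mul_of_pos_left m (Nat.pos_of_ne_zero (by rintro rfl; omega))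
      omega
    have hmq : ((p : ℚ) - 1) = d * m := by
      rw [← Nat.cast_one, ← Nat.cast_sub (by omega), hm, Nat.cast_mul]
    exact dwork_pair_eq_of_mul_eq_natCast hm0 hmp
      (Or.inl (by rw [hmq]; linear_combination (m : ℚ) * hqd)) hx hy
  · obtain ⟨m, hm⟩ := hd.resolve_left hd1
    have hd2 : 2 ≤ d := by
      rcases d with _ | _ | d
      · omega
      · exact absurd (one_dvd _) hd1
      · omega
    have hm0 : 0 < m := Nat.pos_of_ne_zero (by rintro rfl; omega)
    have hmp : m < p := by
      have : 2 * m ≤ d * m := Nat.mul_le_mul_right m hd2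
      omega
    have hmq : ((p : ℚ) + 1) = d * m := by exact_mod_cast hm
    exact dwork_pair_eq_of_mul_eq_natCast hm0 hmp
      (Or.inr (by rw [hmq]; linear_combination (m : ℚ) * hqd)) hx hy

end DworkDash

/-- Let `p ≥ 7` be prime, `q ∈ {4/3, 7/6, 5/4}`, and `β = {1, 1, q, 2-q}`.  Then the multiset
of Dwork dashes `β' = {1', 1', q', (2-q)'}` equals `{1, 1, q-1, 2-q}` as multisets. -/
theorem stmt11 (p : ℕ) [Fact p.Prime] (hp : 7 ≤ p) (q : ℚ)
    (hq : q ∈ ({4/3, 7/6, 5/4} : Set ℚ))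
    (x y : ℤ_[p])
    (hx : (x : ℚ_[p]) = (q : ℚ_[p])) (hy : (y : ℚ_[p]) = ((2 - q : ℚ) : ℚ_[p])) :
    ({dwork p 1, dwork p 1, dwork p x, dwork p y} : Multiset ℚ_[p]) =
      ({(1 : ℚ_[p]), (1 : ℚ_[p]), ((q - 1 : ℚ) : ℚ_[p]), ((2 - q : ℚ) : ℚ_[p])} :
        Multiset ℚ_[p]) := by
  have hp6 : p % 6 = 1 ∨ p % 6 = 5 := by
    have h2 := (Fact.out : p.Prime).eq_one_or_self_of_dvd 2
    have h3 := (Fact.out : p.Prime).eq_one_or_self_of_dvd 3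
    omega
  obtain ⟨d, hd, hqd⟩ : ∃ d : ℕ, (d ∣ p - 1 ∨ d ∣ p + 1) ∧ (q - 1) * d = 1 := by
    simp only [Set.mem_insert_iff, Set.mem_singleton_iff] at hq
    rcases hq with rfl | rfl | rfl
    exacts [⟨3, by omega, by norm_num⟩, ⟨6, by omega, by norm_num⟩,
      ⟨4, by omega, by norm_num⟩]
  rw [dwork_one]
  exact congrArg (fun s => 1 ::ₘ 1 ::ₘ s) (dwork_pair_eq_of_dvd hd hqd hx hy)
end

section
/- Let p ≥ 7 be a prime, (r₁, r₂, q) = (1/2, 1/2, 4/3), α = {1/2, 1/2, 1/2, 1/2}, β = {1, 1, 4/3, 2/3}, and H(k) = (1/2)_k^4 / ((4/3)_k (2/3)_k (1)_k (1)_k). Set u₁ = min([-4/3]_0, [-2/3]_0), u₂ = max([-4/3]_0, [-2/3]_0), and t = [-1/2]_0 = (p-1)/2. Then for 0 ≤ k ≤ p-1: v_p(H(k)) = 0 for 0 ≤ k ≤ u₁, v_p(H(k)) = -1 for u₁ < k ≤ t, v_p(H(k)) = 3 for t < k ≤ u₂, and v_p(H(k)) = 2 for u₂ < k ≤ p-1.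 -/
section Aux

variable {p : ℕ} [hp : Fact p.Prime]

private lemma valRat_int_zero {n : ℤ} (hn : n ≠ 0) (h : ¬ (p:ℤ) ∣ n) :
    padicValRat p (n : ℚ) = 0 := by
  rw [padicValRat.of_int, padicValInt.eq_zero_of_not_dvd h]
  simp

private lemma valRat_int_one (hp7 : 7 ≤ p) {n : ℤ} (h0 : 0 < n) (h2 : n < (p:ℤ)^2)
    (hd : (p:ℤ) ∣ n) : padicValRat p (n : ℚ) = 1 := by
  obtain ⟨m, rfl⟩ := hd
  have hppos : (0:ℤ) < p := by exact_mod_cast hp.out.pos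
  have hm0 : 0 < m := by nlinarith
  have hmd : ¬ (p:ℤ) ∣ m := by
    intro hdm
    have := Int.le_of_dvd hm0 hdm
    nlinarith
  have : ((p * m : ℤ) : ℚ) = (p : ℚ) * (m : ℚ) := by push_cast; ring
  rw [this, padicValRat.mul (Nat.cast_ne_zero.mpr hp.out.pos.ne') (Int.cast_ne_zero.mpr hm0.ne'),
    padicValRat.self hp.out.one_lt, valRat_int_zero hm0.ne' hmd]
  norm_num

private lemma digit_dvd (x : ℚ) (h : ‖(x : ℚ_[p])‖ ≤ 1) (d e : ℤ)
    (hde : (d : ℚ) * x = (e : ℚ)) :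
    (p : ℤ) ∣ (d * (PadicInt.appr (⟨(x : ℚ_[p]), h⟩ : ℤ_[p]) 1 : ℕ) - e) := by
  set X : ℤ_[p] := ⟨(x : ℚ_[p]), h⟩ with hX
  set n : ℕ := PadicInt.appr X 1 with hn
  have hs := PadicInt.appr_spec 1 X
  rw [pow_one, Ideal.mem_span_singleton] at hs
  obtain ⟨c, hc⟩ := hs
  have he : (e : ℤ_[p]) = d * X := by
    apply Subtype.ext
    have hXc : ((X : ℚ_[p])) = (x : ℚ_[p]) := rfl
    simp only [PadicInt.coe_mul, PadicInt.coe_intCast, hXc]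
    rw [show ((e : ℤ) : ℚ_[p]) = ((e : ℚ) : ℚ_[p]) by push_cast; ring, ← hde]
    push_cast; ring
  have key : ((d * (n:ℤ) - e : ℤ) : ℤ_[p]) = (p : ℤ_[p]) * (-(d * c)) := by
    push_cast
    rw [he]
    linear_combination (-(d : ℤ_[p])) * hc
  rw [← PadicInt.norm_int_lt_one_iff_dvd, key]
  calc ‖(p : ℤ_[p]) * (-(d*c))‖ ≤ ‖(p : ℤ_[p])‖ := by
        rw [norm_mul]
        exact mul_le_of_le_one_right (norm_nonneg _) (PadicInt.norm_le_one _)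
    _ < 1 := by
        rw [PadicInt.norm_p]
        exact inv_lt_one_of_one_lt₀ (by exact_mod_cast hp.out.one_lt)

private lemma valRat_prod (f : ℕ → ℚ) :
    ∀ (k : ℕ), (∀ i < k, f i ≠ 0) →
      padicValRat p (∏ i ∈ Finset.range k, f i) = ∑ i ∈ Finset.range k, padicValRat p (f i)
  | 0, _ => by simp
  | (n+1), h => by
    rw [Finset.prod_range_succ, Finset.sum_range_succ,
      padicValRat.mul (Finset.prod_ne_zero_iff.mpr (fun i hi => h i (by
        simp only [Finset.mem_range] at hi; omega))) (h n (by omega)),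
      valRat_prod f n (fun i hi => h i (by omega))]

private lemma val_factor (hp7 : 7 ≤ p) (A B : ℤ) (hA : 0 < A) (hA3 : A ≤ 3)
    (hB : 0 < B) (hB4 : B ≤ 4) (m : ℕ) (hm : m < p) (hdm : (p:ℤ) ∣ A * m + B)
    (i : ℕ) (hi : i < p) :
    padicValRat p ((A * i + B : ℤ) : ℚ) = if i = m then 1 else 0 := by
  have hp7' : (7:ℤ) ≤ (p:ℤ) := by exact_mod_cast hp7
  have hi' : (i:ℤ) < p := by exact_mod_cast hi
  have hm' : (m:ℤ) < p := by exact_mod_cast hm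
  by_cases h : i = m
  · subst h
    rw [if_pos rfl]
    exact valRat_int_one hp7 (by positivity) (by nlinarith [Int.natCast_nonneg i]) hdm
  · rw [if_neg h]
    apply valRat_int_zero (by positivity)
    intro hdvd
    have hsub : (p:ℤ) ∣ A * ((i:ℤ) - m) := by
      have := dvd_sub hdvd hdm
      have heq : (A * i + B) - (A * m + B) = A * ((i:ℤ) - m) := by ring
      rwa [heq] at this
    have hpZ : Prime (p:ℤ) := Nat.prime_iff_prime_int.mp hp.out
    have hpA : ¬ (p:ℤ) ∣ A := by
      intro hd
      have := Int.le_of_dvd hA hd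
      omega
    have hdiff : (p:ℤ) ∣ ((i:ℤ) - m) := (hpZ.dvd_mul.mp hsub).resolve_left hpA
    have : ((i:ℤ) - m) = 0 := by
      refine Int.eq_zero_of_dvd_of_natAbs_lt_natAbs hdiff ?_
      omega
    omega

private lemma val_factor_div (hp7 : 7 ≤ p) (A B : ℤ) (hA : 0 < A) (hA3 : A ≤ 3)
    (hB : 0 < B) (hB4 : B ≤ 4) (m : ℕ) (hm : m < p) (hdm : (p:ℤ) ∣ A * m + B)
    (i : ℕ) (hi : i < p) (x : ℚ) (hx : x = ((A * i + B : ℤ) : ℚ) / ((A : ℤ) : ℚ)) :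
    padicValRat p x = if i = m then 1 else 0 := by
  have hA0 : ((A : ℤ) : ℚ) ≠ 0 := by positivity
  have hnum : ((A * i + B : ℤ) : ℚ) ≠ 0 := by positivity
  have hpA : ¬ (p:ℤ) ∣ A := by
    intro hd
    have := Int.le_of_dvd hA hd
    omega
  rw [hx, padicValRat.div hnum hA0, val_factor hp7 A B hA hA3 hB hB4 m hm hdm i hi,
    valRat_int_zero (by positivity) hpA, sub_zero]

private lemma val_rising (c : ℚ) (hc : 0 < c) (m k : ℕ) (hk : k ≤ p)
    (hval : ∀ i < p, padicValRat p (c + i) = if i = m then 1 else 0) :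
    padicValRat p (risingFact c k) = if m < k then 1 else 0 := by
  rw [risingFact, valRat_prod (fun i => c + i) k (fun i _ => by positivity)]
  rw [Finset.sum_congr rfl (fun i hi => hval i (by
    simp only [Finset.mem_range] at hi; omega))]
  rw [Finset.sum_ite_eq' (Finset.range k) m (fun _ => (1:ℤ))]
  simp [Finset.mem_range]

private lemma small_mult (hp7 : 7 ≤ p) {n : ℤ} (hd : (p:ℤ) ∣ n) (h1 : 0 < n)
    (h2 : n ≤ 2 * p) : n = p ∨ n = 2 * p := by
  obtain ⟨c, rfl⟩ := hd
  have hppos : (0:ℤ) < p := by positivity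
  have hc1 : 1 ≤ c := by nlinarith
  have hc2 : c ≤ 2 := by nlinarith
  interval_cases c
  · left; ring
  · right; ring

end Aux

/-- For `p ≥ 7` prime and the hypergeometric datum `(1/2, 1/2, 4/3)` with
`H(k) = (1/2)_k^4 / ((4/3)_k (2/3)_k (k!)^2)`, setting `u₁ = min([-4/3]₀, [-2/3]₀)`,
`u₂ = max([-4/3]₀, [-2/3]₀)` and `t = [-1/2]₀ = (p-1)/2`, the `p`-adic valuation of `H(k)` for
`0 ≤ k ≤ p-1` is: `0` for `k ≤ u₁`; `-1` for `u₁ < k ≤ t`; `3` for `t < k ≤ u₂`;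
and `2` for `u₂ < k ≤ p-1`. -/
theorem stmt12 (p : ℕ) [Fact p.Prime] (hp : 7 ≤ p)
    (h43 : ‖((-(4/3) : ℚ) : ℚ_[p])‖ ≤ 1) (h23 : ‖((-(2/3) : ℚ) : ℚ_[p])‖ ≤ 1)
    (u₁ u₂ t : ℕ)
    (hu₁ : u₁ = min (PadicInt.appr (⟨((-(4/3) : ℚ) : ℚ_[p]), h43⟩ : ℤ_[p]) 1)
        (PadicInt.appr (⟨((-(2/3) : ℚ) : ℚ_[p]), h23⟩ : ℤ_[p]) 1))
    (hu₂ : u₂ = max (PadicInt.appr (⟨((-(4/3) : ℚ) : ℚ_[p]), h43⟩ : ℤ_[p]) 1)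
        (PadicInt.appr (⟨((-(2/3) : ℚ) : ℚ_[p]), h23⟩ : ℤ_[p]) 1))
    (ht : t = (p - 1) / 2)
    (H : ℕ → ℚ)
    (hH : ∀ k, H k = risingFact (1/2 : ℚ) k ^ 4 /
        (risingFact (4/3 : ℚ) k * risingFact (2/3 : ℚ) k * (k.factorial : ℚ) ^ 2)) :
    ∀ k ≤ p - 1,
      (k ≤ u₁ → padicValRat p (H k) = 0) ∧
      (u₁ < k → k ≤ t → padicValRat p (H k) = -1) ∧
      (t < k → k ≤ u₂ → padicValRat p (H k) = 3) ∧
      (u₂ < k → padicValRat p (H k) = 2) := by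
  have hp' : p.Prime := Fact.out
  set a := PadicInt.appr (⟨((-(4/3) : ℚ) : ℚ_[p]), h43⟩ : ℤ_[p]) 1 with ha_def
  set b := PadicInt.appr (⟨((-(2/3) : ℚ) : ℚ_[p]), h23⟩ : ℤ_[p]) 1 with hb_def
  have ha_lt : a < p := by
    rw [ha_def]
    simpa using PadicInt.appr_lt (⟨((-(4/3) : ℚ) : ℚ_[p]), h43⟩ : ℤ_[p]) 1
  have hb_lt : b < p := by
    rw [hb_def]
    simpa using PadicInt.appr_lt (⟨((-(2/3) : ℚ) : ℚ_[p]), h23⟩ : ℤ_[p]) 1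
  have hdva : (p:ℤ) ∣ 3 * a + 4 := by
    have := digit_dvd (p := p) (-(4/3)) h43 3 (-4) (by norm_num)
    rw [← ha_def] at this
    convert this using 1 <;> ring
  have hdvb : (p:ℤ) ∣ 3 * b + 2 := by
    have := digit_dvd (p := p) (-(2/3)) h23 3 (-2) (by norm_num)
    rw [← hb_def] at this
    convert this using 1 <;> ring
  have hodd : p % 2 = 1 := by
    rcases hp'.eq_two_or_odd with h | h
    · omega
    · exact h
  have htp : 2 * t + 1 = p := by omega
  -- a + b + 2 = p
  have hab : a + b + 2 = p := by
    have hsum : (p:ℤ) ∣ 3 * ((a:ℤ) + b + 2) := by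
      have := dvd_add hdva hdvb
      have heq : (3 * (a:ℤ) + 4) + (3 * b + 2) = 3 * ((a:ℤ) + b + 2) := by ring
      rwa [heq] at this
    have hpZ : Prime (p:ℤ) := Nat.prime_iff_prime_int.mp hp'
    have hp3 : ¬ (p:ℤ) ∣ 3 := by
      intro hd
      have := Int.le_of_dvd (by norm_num) hd
      omega
    have hdv : (p:ℤ) ∣ ((a:ℤ) + b + 2) := (hpZ.dvd_mul.mp hsum).resolve_left hp3
    have hcase := small_mult hp hdv (by positivity) (by push_cast; omega)
    rcases hcase with h | h
    · omega
    · exfalso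
      have hae : (a:ℤ) = p - 1 := by omega
      have : (p:ℤ) ∣ 1 := by
        have h1 : (p:ℤ) ∣ (3 * a + 4) - 3 * p := dvd_sub hdva (dvd_mul_left (p:ℤ) 3)
        have : (3 * (a:ℤ) + 4) - 3 * p = 1 := by rw [hae]; ring
        rwa [this] at h1
      have := Int.le_of_dvd (by norm_num) this
      omega
  -- per factor valuations
  have hvA : ∀ i < p, padicValRat p ((1/2 : ℚ) + i) = if i = t then 1 else 0 := by
    intro i hi
    refine val_factor_div hp 2 1 (by norm_num) (by norm_num) (by norm_num) (by norm_num)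
      t (by omega) ?_ i hi _ (by push_cast; ring)
    have : 2 * (t:ℤ) + 1 = p := by exact_mod_cast htp
    rw [this]
  have hvB : ∀ i < p, padicValRat p ((4/3 : ℚ) + i) = if i = a then 1 else 0 := by
    intro i hi
    exact val_factor_div hp 3 4 (by norm_num) (by norm_num) (by norm_num) (by norm_num)
      a ha_lt hdva i hi _ (by push_cast; ring)
  have hvC : ∀ i < p, padicValRat p ((2/3 : ℚ) + i) = if i = b then 1 else 0 := by
    intro i hi
    exact val_factor_div hp 3 2 (by norm_num) (by norm_num) (by norm_num) (by norm_num)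
      b hb_lt hdvb i hi _ (by push_cast; ring)
  have hrpos : ∀ (c : ℚ), 0 < c → ∀ k, (0:ℚ) < risingFact c k := fun c hc k =>
    Finset.prod_pos (fun i _ => by positivity)
  have key : ∀ k ≤ p - 1, padicValRat p (H k) =
      4 * (if t < k then 1 else 0) -
        ((if a < k then 1 else 0) + (if b < k then 1 else 0)) := by
    intro k hk
    have hkp : k ≤ p := by omega
    have h1 := val_rising (p := p) (1/2) (by norm_num) t k hkp hvA
    have h2 := val_rising (p := p) (4/3) (by norm_num) a k hkp hvB
    have h3 := val_rising (p := p) (2/3) (by norm_num) b k hkp hvC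
    have hA0 : risingFact (1/2 : ℚ) k ≠ 0 := ne_of_gt (hrpos _ (by norm_num) k)
    have hB0 : risingFact (4/3 : ℚ) k ≠ 0 := ne_of_gt (hrpos _ (by norm_num) k)
    have hC0 : risingFact (2/3 : ℚ) k ≠ 0 := ne_of_gt (hrpos _ (by norm_num) k)
    have hF0 : (k.factorial : ℚ) ≠ 0 := Nat.cast_ne_zero.mpr k.factorial_ne_zero
    have hfact : padicValRat p ((k.factorial : ℚ)) = 0 := by
      rw [padicValRat.of_nat]
      norm_cast
      apply padicValNat.eq_zero_of_not_dvd
      intro hdv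
      have := (Nat.Prime.dvd_factorial hp').1 hdv
      omega
    rw [hH k, padicValRat.div (pow_ne_zero _ hA0)
        (mul_ne_zero (mul_ne_zero hB0 hC0) (pow_ne_zero _ hF0)),
      padicValRat.pow (risingFact (1/2 : ℚ) k),
      padicValRat.mul (mul_ne_zero hB0 hC0) (pow_ne_zero _ hF0),
      padicValRat.mul hB0 hC0, padicValRat.pow (k.factorial : ℚ), h1, h2, h3, hfact]
    ring
  intro k hk
  have hkey := key k hk
  rcases le_total a b with hle | hle
  · rw [min_eq_left hle] at hu₁
    rw [max_eq_right hle] at hu₂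
    subst hu₁ hu₂
    refine ⟨fun h1 => ?_, fun h1 h2 => ?_, fun h1 h2 => ?_, fun h1 => ?_⟩ <;> rw [hkey]
    · rw [if_neg (by omega), if_neg (by omega), if_neg (by omega)]; norm_num
    · rw [if_neg (by omega), if_pos (by omega), if_neg (by omega)]; norm_num
    · rw [if_pos (by omega), if_pos (by omega), if_neg (by omega)]; norm_num
    · rw [if_pos (by omega), if_pos (by omega), if_pos (by omega)]; norm_num
  · rw [min_eq_right hle] at hu₁
    rw [max_eq_left hle] at hu₂
    subst hu₁ hu₂
    refine ⟨fun h1 => ?_, fun h1 h2 => ?_, fun h1 h2 => ?_, fun h1 => ?_⟩ <;> rw [hkey]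
    · rw [if_neg (by omega), if_neg (by omega), if_neg (by omega)]; norm_num
    · rw [if_neg (by omega), if_neg (by omega), if_pos (by omega)]; norm_num
    · rw [if_pos (by omega), if_neg (by omega), if_pos (by omega)]; norm_num
    · rw [if_pos (by omega), if_pos (by omega), if_pos (by omega)]; norm_num
end

section
/- Let p ≥ 7 be a prime, s ≥ 1 an integer, and let (α, β) be the hypergeometric datum with α = {1/2, 1/2, 1/2, 1/2} and β = {1, 1, 4/3, 2/3}. Then for all 0 ≤ k ≤ p^s - 1, p^s · H(k) ∈ ℤ_p, where H(k) = (1/2)_k^4 / ((4/3)_k (2/3)_k (k!)^2). In particular p^s · Σ_{k=0}^{p^s-1} H(k) ∈ ℤ_p. -/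
open Nat

lemma risingFact_succ {R : Type*} [CommRing R] (a : R) (k : ℕ) :
    risingFact a (k + 1) = risingFact a k * (a + k) := by
  simp [risingFact, Finset.prod_range_succ]

lemma risingFact_one_half (k : ℕ) :
    risingFact (1/2 : ℚ) k = (2 * k)! / (2 ^ (2 * k) * k !) := by
  induction k with
  | zero => simp [risingFact]
  | succ k ih =>
    rw [risingFact_succ, ih, show 2 * (k + 1) = 2 * k + 1 + 1 by ring,
      Nat.factorial_succ (2 * k + 1), Nat.factorial_succ (2 * k), Nat.factorial_succ k]
    push_cast
    field_simp
    ring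

lemma risingFact_four_thirds_mul_two_thirds (k : ℕ) :
    risingFact (4/3 : ℚ) k * risingFact (2/3 : ℚ) k = (3 * k + 1)! / (3 ^ (3 * k) * k !) := by
  induction k with
  | zero => simp [risingFact]
  | succ k ih =>
    rw [risingFact_succ, risingFact_succ, mul_mul_mul_comm, ih,
      show 3 * (k + 1) + 1 = 3 * k + 1 + 1 + 1 + 1 by ring, Nat.factorial_succ (3 * k + 1 + 1 + 1),
      Nat.factorial_succ (3 * k + 1 + 1), Nat.factorial_succ (3 * k + 1), Nat.factorial_succ k]
    push_cast
    field_simp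
    ring

lemma risingFact_ratio_eq_factorials (k : ℕ) :
    risingFact (1/2 : ℚ) k ^ 4 /
        (risingFact (4/3 : ℚ) k * risingFact (2/3 : ℚ) k * (k ! : ℚ) ^ 2) =
      ((3 ^ (3 * k) * (2 * k)! ^ 4 : ℕ) : ℚ) /
        ((2 ^ (8 * k) * k ! ^ 5 * (3 * k + 1)! : ℕ) : ℚ) := by
  rw [risingFact_one_half, risingFact_four_thirds_mul_two_thirds,
    show 8 * k = 2 * k * 4 by ring]
  push_cast
  field_simp
  ring

lemma Nat.five_mul_div_add_three_mul_add_one_div_le {q : ℕ} (hq : 2 ≤ q) (k : ℕ) :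
    5 * (k / q) + (3 * k + 1) / q ≤ 4 * (2 * k / q) + 1 := by
  have hq0 : 0 < q := by omega
  obtain ⟨a, r, hr, rfl⟩ : ∃ a r, r < q ∧ k = q * a + r :=
    ⟨k / q, k % q, Nat.mod_lt _ hq0, (Nat.div_add_mod k q).symm⟩
  rw [Nat.mul_add_div hq0, show 2 * (q * a + r) = q * (2 * a) + 2 * r by ring,
    Nat.mul_add_div hq0, show 3 * (q * a + r) + 1 = q * (3 * a) + (3 * r + 1) by ring,
    Nat.mul_add_div hq0, Nat.div_eq_of_lt hr]
  rcases lt_or_ge (2 * r) q with h | h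
  · have h2 : 2 * r / q = 0 := Nat.div_eq_of_lt h
    have h3 : (3 * r + 1) / q < 2 := (Nat.div_lt_iff_lt_mul hq0).2 (by omega)
    omega
  · have h2 : 1 ≤ 2 * r / q := (Nat.le_div_iff_mul_le hq0).2 (by omega)
    have h3 : (3 * r + 1) / q < 4 := (Nat.div_lt_iff_lt_mul hq0).2 (by omega)
    omega

lemma padicValNat_factorial_five_mul_add_le {p : ℕ} [Fact p.Prime] (hp : 3 ≤ p) {s k : ℕ}
    (hk : k < p ^ s) :
    5 * padicValNat p k ! + padicValNat p (3 * k + 1)! ≤ 4 * padicValNat p (2 * k)! + s := by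
  have hlog : ∀ n ≤ 3 * k + 1, Nat.log p n < s + 1 := fun n hn =>
    Nat.log_lt_of_lt_pow' (Nat.succ_ne_zero s) <|
      calc n ≤ 3 * k + 1 := hn
        _ < 3 * p ^ s := by omega
        _ ≤ p ^ (s + 1) := by rw [pow_succ']; exact Nat.mul_le_mul_right _ hp
  rw [padicValNat_factorial (hlog k (by omega)), padicValNat_factorial (hlog _ le_rfl),
    padicValNat_factorial (hlog (2 * k) (by omega)), Finset.mul_sum, Finset.mul_sum,
    ← Finset.sum_add_distrib]
  calc ∑ i ∈ Finset.Ico 1 (s + 1), (5 * (k / p ^ i) + (3 * k + 1) / p ^ i)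
      ≤ ∑ i ∈ Finset.Ico 1 (s + 1), (4 * (2 * k / p ^ i) + 1) :=
        Finset.sum_le_sum fun i hi => Nat.five_mul_div_add_three_mul_add_one_div_le
          ((by omega : 2 ≤ p).trans
            (Nat.le_self_pow (Nat.one_le_iff_ne_zero.1 (Finset.mem_Ico.1 hi).1) p)) k
    _ = ∑ i ∈ Finset.Ico 1 (s + 1), 4 * (2 * k / p ^ i) + s := by
        simp [Finset.sum_add_distrib]

lemma Padic.norm_natCast_div_natCast_le_one {p : ℕ} [Fact p.Prime] {m n : ℕ} (hm : m ≠ 0)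
    (hn : n ≠ 0) (h : padicValNat p n ≤ padicValNat p m) :
    ‖(((m : ℚ) / n : ℚ) : ℚ_[p])‖ ≤ 1 := by
  rw [Padic.norm_le_one_iff_val_nonneg, Padic.valuation_ratCast,
    padicValRat.div (by exact_mod_cast hm) (by exact_mod_cast hn), padicValRat.of_nat,
    padicValRat.of_nat]
  omega

theorem stmt13_general (p : ℕ) [Fact p.Prime] (hp : 7 ≤ p) (s : ℕ)
    (H : ℕ → ℚ)
    (hH : ∀ k, H k = risingFact (1/2 : ℚ) k ^ 4 /
        (risingFact (4/3 : ℚ) k * risingFact (2/3 : ℚ) k * (k.factorial : ℚ) ^ 2)) :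
    (∀ k ≤ p ^ s - 1, ‖((((p : ℚ) ^ s * H k) : ℚ) : ℚ_[p])‖ ≤ 1) ∧
      ‖((((p : ℚ) ^ s * ∑ k ∈ Finset.range (p ^ s), H k) : ℚ) : ℚ_[p])‖ ≤ 1 := by
  have hterm : ∀ k < p ^ s, ‖((((p : ℚ) ^ s * H k) : ℚ) : ℚ_[p])‖ ≤ 1 := by
    intro k hk
    rw [hH, risingFact_ratio_eq_factorials, ← mul_div_assoc, ← Nat.cast_pow, ← Nat.cast_mul]
    refine Padic.norm_natCast_div_natCast_le_one (by positivity) (by positivity) ?_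
    have h2 : p ≠ 2 := by omega
    have h3 : p ≠ 3 := by omega
    simpa [padicValNat.mul, padicValNat.pow, padicValNat_primes h2, padicValNat_primes h3,
      (Fact.out : p.Prime).ne_zero, Nat.factorial_ne_zero, add_comm s] using
      padicValNat_factorial_five_mul_add_le (by omega) hk
  refine ⟨fun k hk => hterm k (Nat.lt_of_le_pred (by positivity) hk), ?_⟩
  rw [Finset.mul_sum, Rat.cast_sum]
  exact IsUltrametricDist.norm_sum_le_of_forall_le_of_nonneg zero_le_one
    fun k hk => hterm k (Finset.mem_range.1 hk)

/-- For `p ≥ 7` prime, `s ≥ 1`, and the hypergeometric datum with `α = {1/2,1/2,1/2,1/2}`,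
`β = {1, 1, 4/3, 2/3}`: for all `0 ≤ k ≤ p^s - 1` we have `p^s · H(k) ∈ ℤ_p`, where
`H(k) = (1/2)_k^4 / ((4/3)_k (2/3)_k (k!)^2)`.  In particular
`p^s · ∑_{k=0}^{p^s-1} H(k) ∈ ℤ_p`. -/
theorem stmt13 (p : ℕ) [Fact p.Prime] (hp : 7 ≤ p) (s : ℕ) (hs : 1 ≤ s)
    (H : ℕ → ℚ)
    (hH : ∀ k, H k = risingFact (1/2 : ℚ) k ^ 4 /
        (risingFact (4/3 : ℚ) k * risingFact (2/3 : ℚ) k * (k.factorial : ℚ) ^ 2)) :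
    (∀ k ≤ p ^ s - 1, ‖((((p : ℚ) ^ s * H k) : ℚ) : ℚ_[p])‖ ≤ 1) ∧
      ‖((((p : ℚ) ^ s * ∑ k ∈ Finset.range (p ^ s), H k) : ℚ) : ℚ_[p])‖ ≤ 1 :=
  stmt13_general p hp s H hH
end

section
/- For a prime p ≥ 5, G₁(1)² = G₂(1), where G_k(a) = Γ_p^{(k)}(a)/Γ_p(a) for Morita's p-adic Gamma function Γ_p. -/
open Finset Filter
set_option maxHeartbeats 1000000

lemma stmt16_norm_le_one (p : ℕ) [Fact p.Prime] (x : ℚ_[p]) (h : ‖x‖ < (p:ℝ)) : ‖x‖ ≤ 1 := by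
  rcases eq_or_ne x 0 with rfl | hx
  · simp
  · rw [Padic.norm_eq_zpow_neg_valuation hx] at h ⊢
    have hp : (1:ℝ) < p := by exact_mod_cast (Fact.out : p.Prime).one_lt
    have h' : (p:ℝ) ^ (-x.valuation) < (p:ℝ) ^ (1:ℤ) := by simpa using h
    have := (zpow_lt_zpow_iff_right₀ hp).mp h'
    calc (p:ℝ) ^ (-x.valuation) ≤ (p:ℝ)^(0:ℤ) := zpow_le_zpow_right₀ hp.le (by omega)
    _ = 1 := by simp

lemma tendsto_ppow (p : ℕ) (hp : 1 < p) :
    Filter.Tendsto (fun k : ℕ => (p:ℝ)^(-(k:ℤ))) Filter.atTop (nhds 0) := by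
  have h0 : (0:ℝ) ≤ (p:ℝ)⁻¹ := by positivity
  have h1 : (p:ℝ)⁻¹ < 1 := inv_lt_one_of_one_lt₀ (by exact_mod_cast hp)
  have := tendsto_pow_atTop_nhds_zero_of_lt_one h0 h1
  convert this using 2 with k
  rw [zpow_neg, zpow_natCast, inv_pow]

lemma tendsto_of_approx (p : ℕ) [Fact p.Prime] (hp : 1 < p) (x : ℚ_[p]) (a : ℕ → ℚ_[p])
    (h : ∀ k, ‖x - a k‖ ≤ (p:ℝ)^(-(k:ℤ))) :
    Filter.Tendsto a Filter.atTop (nhds x) := by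
  rw [tendsto_iff_dist_tendsto_zero]
  refine squeeze_zero (fun k => dist_nonneg) (fun k => ?_) (tendsto_ppow p hp)
  rw [dist_eq_norm, norm_sub_rev]
  exact h k

lemma approx (p : ℕ) [hf : Fact p.Prime] (x : ℚ_[p]) (hx : ‖x‖ < 1) (k : ℕ) (hk : 1 ≤ k) :
    ∃ m : ℕ, 0 < m ∧ m ≤ p^k ∧ p ∣ m ∧ ‖x - m‖ ≤ (p:ℝ)^(-(k:ℤ)) := by
  have hp1 : (1:ℝ) < p := by exact_mod_cast hf.out.one_lt
  have hppos : (0:ℝ) < (p:ℝ)^(-(k:ℤ)) := zpow_pos (by linarith) _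
  obtain ⟨n₀, hn₀⟩ : ∃ n₀ : ℕ, ‖x - (n₀:ℚ_[p])‖ < (p:ℝ)^(-(k:ℤ)) := by
    set z : ℤ_[p] := ⟨x, hx.le⟩ with hz
    obtain ⟨n, hn⟩ := PadicInt.denseRange_natCast.exists_dist_lt z hppos
    refine ⟨n, ?_⟩
    have : dist z (n:ℤ_[p]) = ‖x - (n:ℚ_[p])‖ := by
      rw [dist_eq_norm, PadicInt.norm_def]
      push_cast
      rfl
    rw [this] at hn; exact hn
  have hlt1 : (p:ℝ)^(-(k:ℤ)) < 1 := by
    calc (p:ℝ)^(-(k:ℤ)) ≤ (p:ℝ)^(-(1:ℤ)) := zpow_le_zpow_right₀ hp1.le (by omega)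
    _ < (p:ℝ)^(0:ℤ) := zpow_lt_zpow_right₀ hp1 (by omega)
    _ = 1 := by simp
  set m : ℕ := if n₀ % p^k = 0 then p^k else n₀ % p^k with hm
  have hpk : 0 < p^k := Nat.pow_pos hf.out.pos
  have hmpos : 0 < m := by
    rw [hm]; split_ifs with h
    · exact hpk
    · exact Nat.pos_of_ne_zero h
  have hmle : m ≤ p^k := by
    rw [hm]; split_ifs
    · exact le_refl _
    · exact (Nat.mod_lt _ hpk).le
  have hc : (n₀:ℤ) = (p:ℤ)^k * ((n₀ / p^k : ℕ) : ℤ) + ((n₀ % p^k : ℕ) : ℤ) := by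
    exact_mod_cast (Nat.div_add_mod n₀ (p^k)).symm
  have hdvd : ((p:ℤ)^k) ∣ ((n₀:ℤ) - (m:ℤ)) := by
    rw [hm]; split_ifs with h
    · refine ⟨((n₀ / p^k : ℕ) : ℤ) - 1, ?_⟩
      rw [h] at hc; push_cast at hc ⊢; linear_combination hc
    · exact ⟨((n₀ / p^k : ℕ) : ℤ), by linear_combination hc⟩
  have hnm : ‖(n₀:ℚ_[p]) - (m:ℚ_[p])‖ ≤ (p:ℝ)^(-(k:ℤ)) := by
    have := (Padic.norm_int_le_pow_iff_dvd ((n₀:ℤ) - (m:ℤ)) k).mpr hdvd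
    push_cast at this
    exact this
  have hxm : ‖x - (m:ℚ_[p])‖ ≤ (p:ℝ)^(-(k:ℤ)) := by
    have : x - (m:ℚ_[p]) = (x - n₀) + ((n₀:ℚ_[p]) - m) := by ring
    rw [this]
    exact le_trans (Padic.nonarchimedean _ _) (max_le hn₀.le hnm)
  have hpdvd : p ∣ m := by
    have h1 : ‖(m:ℚ_[p])‖ < 1 := by
      have heq : (m:ℚ_[p]) = ((m:ℚ_[p]) - x) + x := by ring
      rw [heq]
      calc ‖((m:ℚ_[p]) - x) + x‖ ≤ max ‖(m:ℚ_[p]) - x‖ ‖x‖ := Padic.nonarchimedean _ _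
      _ < 1 := max_lt (by rw [norm_sub_rev]; exact lt_of_le_of_lt hxm hlt1) hx
    have := (Padic.norm_intCast_lt_one_iff (k := (m:ℤ))).mp (by push_cast; exact h1)
    exact_mod_cast this
  exact ⟨m, hmpos, hmle, hpdvd, hxm⟩

lemma key_cong (p N m : ℕ) (hp : p.Prime) (hodd : Odd p) (hpN : p ∣ N)
    (hm0 : 0 < m) (hmle : m ≤ N) (hpm : p ∣ m) :
    (((∏ i ∈ (Finset.Ico 1 m).filter (fun i => ¬ p ∣ i), i) *
      (∏ i ∈ (Finset.Ico 1 (N+1-m)).filter (fun i => ¬ p ∣ i), i) : ℕ) : ZMod N)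
    = ((∏ i ∈ (Finset.Ico 1 N).filter (fun i => ¬ p ∣ i), i : ℕ) : ZMod N) := by
  set n := N + 1 - m with hn
  -- split the RHS product
  have hsplit : (Finset.Ico 1 N).filter (fun i => ¬ p ∣ i)
      = (Finset.Ico 1 m).filter (fun i => ¬ p ∣ i) ∪ (Finset.Ico m N).filter (fun i => ¬ p ∣ i) := by
    rw [← Finset.filter_union, Finset.Ico_union_Ico_eq_Ico hm0 hmle]
  have hdisj : Disjoint ((Finset.Ico 1 m).filter (fun i => ¬ p ∣ i))
      ((Finset.Ico m N).filter (fun i => ¬ p ∣ i)) :=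
    Finset.disjoint_filter_filter (Finset.Ico_disjoint_Ico_consecutive 1 m N)
  -- the bijection part
  have hbij : (∏ i ∈ (Finset.Ico m N).filter (fun i => ¬ p ∣ i), (i : ZMod N))
      = (-1)^(((Finset.Ico 1 n).filter (fun i => ¬ p ∣ i)).card) *
        (∏ j ∈ (Finset.Ico 1 n).filter (fun i => ¬ p ∣ i), (j : ZMod N)) := by
    have step1 : (∏ i ∈ (Finset.Ico m N).filter (fun i => ¬ p ∣ i), (i : ZMod N))
        = ∏ j ∈ (Finset.Ico 1 n).filter (fun i => ¬ p ∣ i), ((N - j : ℕ) : ZMod N) := by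
      refine Finset.prod_nbij' (fun i => N - i) (fun j => N - j) ?_ ?_ ?_ ?_ ?_
      · intro i hi
        simp only [Finset.mem_filter, Finset.mem_Ico] at hi ⊢
        refine ⟨⟨by omega, by omega⟩, fun hdvd => hi.2 ?_⟩
        have h2 : p ∣ N - (N - i) := Nat.dvd_sub hpN hdvd
        rwa [Nat.sub_sub_self (by omega)] at h2
      · intro j hj
        simp only [Finset.mem_filter, Finset.mem_Ico] at hj ⊢
        refine ⟨⟨by omega, by omega⟩, fun hdvd => hj.2 ?_⟩
        have h2 : p ∣ N - (N - j) := Nat.dvd_sub hpN hdvd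
        rwa [Nat.sub_sub_self (by omega)] at h2
      · intro i hi
        simp only [Finset.mem_filter, Finset.mem_Ico] at hi
        show N - (N - i) = i
        omega
      · intro j hj
        simp only [Finset.mem_filter, Finset.mem_Ico] at hj
        show N - (N - j) = j
        omega
      · intro i hi
        simp only [Finset.mem_filter, Finset.mem_Ico] at hi
        rw [Nat.sub_sub_self (by omega)]
    have step2 : ∀ j ∈ (Finset.Ico 1 n).filter (fun i => ¬ p ∣ i),
        ((N - j : ℕ) : ZMod N) = - (j : ZMod N) := by
      intro j hj
      simp only [Finset.mem_filter, Finset.mem_Ico] at hj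
      rw [Nat.cast_sub (by omega), ZMod.natCast_self, zero_sub]
    have step3 : ∏ x ∈ (Finset.Ico 1 n).filter (fun i => ¬ p ∣ i), -(x : ZMod N)
        = ∏ x ∈ (Finset.Ico 1 n).filter (fun i => ¬ p ∣ i), ((-1) * (x : ZMod N)) :=
      Finset.prod_congr rfl (fun x _ => (neg_one_mul _).symm)
    rw [step1, Finset.prod_congr rfl step2, step3, Finset.prod_mul_distrib, Finset.prod_const]
  -- card is even
  have hcard : Even (((Finset.Ico 1 n).filter (fun i => ¬ p ∣ i)).card) := by
    have hIoc : Finset.Ico 1 n = Finset.Ioc 0 (n-1) := by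
      ext x; simp only [Finset.mem_Ico, Finset.mem_Ioc]; omega
    have h1 : (((Finset.Ioc 0 (n-1)).filter (fun i => p ∣ i)).card) = (n-1)/p := by
      simpa using Nat.Ioc_filter_dvd_card_eq_div (n-1) p
    have h2 := Finset.card_filter_add_card_filter_not
      (s := Finset.Ioc 0 (n-1)) (p := fun i => p ∣ i)
    have h3 : (Finset.Ioc 0 (n-1)).card = n - 1 := by simp
    have hdvdnm : p ∣ N - m := Nat.dvd_sub hpN hpm
    obtain ⟨t, ht⟩ := hdvdnm
    have hn1 : n - 1 = p * t := by omega
    have hdiv : (n-1)/p = t := by rw [hn1, Nat.mul_div_cancel_left _ hp.pos]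
    have hcardeq : (((Finset.Ico 1 n).filter (fun i => ¬ p ∣ i)).card) = p * t - t := by
      rw [hIoc]
      omega
    rw [hcardeq]
    obtain ⟨c, hc⟩ := hodd
    refine ⟨(c+1)*t - t, by rw [hc]; ring_nf; omega⟩
  push_cast
  rw [hsplit, Finset.prod_union hdisj, hbij, hcard.neg_one_pow, one_mul]

lemma sign_pair {K : Type*} [Field K] (a b : K) (m n : ℕ) (h : Even (m+n)) :
    ((-1:K)^m * a) * ((-1:K)^n * b) = a * b := by
  rw [show ((-1:K)^m * a) * ((-1:K)^n * b) = ((-1:K)^(m+n)) * (a*b) by rw [pow_add]; ring,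
    h.neg_one_pow, one_mul]

section
variable {p : ℕ} [hf : Fact p.Prime] (Gp : ℚ_[p] → ℚ_[p])
variable (hval : ∀ n : ℕ, 0 < n →
      Gp (n : ℚ_[p]) = (-1) ^ n * ∏ i ∈ (Finset.Ico 1 n).filter (fun i => ¬ p ∣ i), (i : ℚ_[p]))
variable (hsmooth : ∀ x : ℚ_[p], ‖x‖ ≤ 1 → ContDiffAt ℚ_[p] (⊤ : ℕ∞) Gp x)

include hval

lemma Gp_one : Gp 1 = -1 := by
  have := hval 1 one_pos
  simpa using this

lemma Gp_nat (n : ℕ) (hn : 0 < n) :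
    Gp (n : ℚ_[p]) = (-1)^n * ((∏ i ∈ (Finset.Ico 1 n).filter (fun i => ¬ p ∣ i), i : ℕ) : ℚ_[p]) := by
  rw [hval n hn, Nat.cast_prod]

lemma Gp_step (m : ℕ) (hm : 0 < m) (hpm : p ∣ m) :
    Gp ((m:ℚ_[p]) + 1) = - Gp (m:ℚ_[p]) := by
  have h1 : ((m:ℚ_[p]) + 1) = ((m+1 : ℕ) : ℚ_[p]) := by push_cast; ring
  rw [h1, hval (m+1) (by omega), hval m hm]
  have h2 : (Finset.Ico 1 (m+1)).filter (fun i => ¬ p ∣ i)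
      = (Finset.Ico 1 m).filter (fun i => ¬ p ∣ i) := by
    rw [Nat.Ico_succ_right_eq_insert_Ico hm, Finset.filter_insert, if_neg (by simpa using hpm)]
  rw [h2, pow_succ]
  ring

include hsmooth

lemma Gp_transl (x : ℚ_[p]) (hx : ‖x‖ < 1) : Gp (x + 1) = - Gp x := by
  have hp1 : (1:ℝ) < p := by exact_mod_cast hf.out.one_lt
  choose m hm0 hmle hpm hnorm using fun k : ℕ => approx p x hx (k+1) (by omega)
  have hb : ∀ k : ℕ, ‖x - ((m k : ℕ) : ℚ_[p])‖ ≤ (p:ℝ)^(-(k:ℤ)) := fun k =>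
    le_trans (hnorm k) (zpow_le_zpow_right₀ hp1.le (by omega))
  have ha : Tendsto (fun k => ((m k : ℕ) : ℚ_[p])) atTop (nhds x) :=
    tendsto_of_approx p hf.out.one_lt x _ hb
  have hx1 : ‖x + 1‖ ≤ 1 := le_trans (Padic.nonarchimedean _ _) (max_le hx.le (by simp))
  have hc1 : ContinuousAt Gp (x+1) := (hsmooth _ hx1).continuousAt
  have hc0 : ContinuousAt Gp x := (hsmooth _ hx.le).continuousAt
  have h1 : Tendsto (fun k => Gp (((m k : ℕ) : ℚ_[p]) + 1)) atTop (nhds (Gp (x+1))) :=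
    (hc1.tendsto).comp (ha.add_const 1)
  have h2 : Tendsto (fun k => - Gp (((m k : ℕ) : ℚ_[p]))) atTop (nhds (- Gp x)) :=
    ((hc0.tendsto).comp ha).neg
  have heq : (fun k => Gp (((m k : ℕ) : ℚ_[p]) + 1)) = fun k => - Gp (((m k : ℕ) : ℚ_[p])) := by
    funext k; exact Gp_step Gp hval (m k) (hm0 k) (hpm k)
  rw [heq] at h1
  exact tendsto_nhds_unique h1 h2

lemma Gp_refl (hodd : Odd p) (x : ℚ_[p]) (hx : ‖x‖ < 1) :
    Gp x * Gp (1 - x) = Gp 0 * Gp 1 := by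
  have hp1 : (1:ℝ) < p := by exact_mod_cast hf.out.one_lt
  choose m hm0 hmle hpm hnorm using fun k : ℕ => approx p x hx (k+1) (by omega)
  set A : ℕ → ℕ := fun k => ∏ i ∈ (Finset.Ico 1 (m k)).filter (fun i => ¬ p ∣ i), i with hA
  set B : ℕ → ℕ := fun k => ∏ i ∈ (Finset.Ico 1 (p^(k+1)+1-(m k))).filter (fun i => ¬ p ∣ i), i with hB
  set C : ℕ → ℕ := fun k => ∏ i ∈ (Finset.Ico 1 (p^(k+1))).filter (fun i => ¬ p ∣ i), i with hC
  have hbm : ∀ k : ℕ, ‖x - ((m k : ℕ) : ℚ_[p])‖ ≤ (p:ℝ)^(-(k:ℤ)) := fun k =>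
    le_trans (hnorm k) (zpow_le_zpow_right₀ hp1.le (by omega))
  have haM : Tendsto (fun k => ((m k : ℕ) : ℚ_[p])) atTop (nhds x) :=
    tendsto_of_approx p hf.out.one_lt x _ hbm
  have hNnorm : ∀ k : ℕ, ‖((p^(k+1) : ℕ) : ℚ_[p])‖ ≤ (p:ℝ)^(-(k:ℤ)) := by
    intro k
    have : ((p^(k+1) : ℕ) : ℚ_[p]) = (p : ℚ_[p])^(k+1) := by push_cast; ring
    rw [this, Padic.norm_p_pow]
    exact zpow_le_zpow_right₀ hp1.le (by omega)
  have haN : Tendsto (fun k => ((p^(k+1) : ℕ) : ℚ_[p])) atTop (nhds 0) := by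
    refine tendsto_of_approx p hf.out.one_lt 0 _ (fun k => ?_)
    rw [zero_sub, norm_neg]; exact hNnorm k
  have hanmem : ∀ k : ℕ, ((p^(k+1)+1-(m k) : ℕ) : ℚ_[p]) = ((p^(k+1):ℕ) : ℚ_[p]) + 1 - ((m k : ℕ) : ℚ_[p]) := by
    intro k
    have h1 : m k ≤ p^(k+1) + 1 := le_trans (hmle k) (by omega)
    push_cast [Nat.cast_sub h1]
    ring
  have han : Tendsto (fun k => ((p^(k+1)+1-(m k) : ℕ) : ℚ_[p])) atTop (nhds (1 - x)) := by
    have h := ((haN.add_const 1).sub haM)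
    simp only [zero_add] at h
    exact h.congr (fun k => (hanmem k).symm)
  have h1x : ‖(1:ℚ_[p]) - x‖ ≤ 1 := by
    calc ‖(1:ℚ_[p]) - x‖ = ‖(1:ℚ_[p]) + (-x)‖ := by rw [sub_eq_add_neg]
    _ ≤ max ‖(1:ℚ_[p])‖ ‖-x‖ := Padic.nonarchimedean _ _
    _ ≤ 1 := max_le (by simp) (by simpa using hx.le)
  have hcx : ContinuousAt Gp x := (hsmooth _ hx.le).continuousAt
  have hc1x : ContinuousAt Gp (1-x) := (hsmooth _ h1x).continuousAt
  have hc0 : ContinuousAt Gp 0 := (hsmooth 0 (by simp)).continuousAt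
  -- limit of the main sequence
  have hb : Tendsto (fun k => Gp ((m k : ℕ)) * Gp (((p^(k+1)+1-(m k) : ℕ)))) atTop
      (nhds (Gp x * Gp (1-x))) :=
    ((hcx.tendsto).comp haM).mul ((hc1x.tendsto).comp han)
  have hcseq : Tendsto (fun k => Gp (((p^(k+1) : ℕ) : ℚ_[p])) * Gp 1) atTop
      (nhds (Gp 0 * Gp 1)) :=
    (((hc0.tendsto).comp haN)).mul_const _
  -- values as integers
  have hval1 : ∀ k : ℕ, Gp ((m k : ℕ)) * Gp (((p^(k+1)+1-(m k) : ℕ))) = ((A k * B k : ℕ) : ℚ_[p]) := by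
    intro k
    have hmk := hm0 k
    have hnk : 0 < p^(k+1)+1-(m k) := by have := hmle k; omega
    rw [Gp_nat Gp hval _ hmk, Gp_nat Gp hval _ hnk, Nat.cast_mul]
    simp only [hA, hB]
    have heven : Even ((m k) + (p^(k+1)+1-(m k))) := by
      have h2 : (m k) + (p^(k+1)+1-(m k)) = p^(k+1) + 1 := by have := hmle k; omega
      rw [h2]
      exact (hodd.pow).add_one
    exact sign_pair _ _ _ _ heven
  have hval2 : ∀ k : ℕ, Gp (((p^(k+1) : ℕ) : ℚ_[p])) * Gp 1 = ((C k : ℕ) : ℚ_[p]) := by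
    intro k
    rw [Gp_nat Gp hval _ (Nat.pow_pos hf.out.pos), Gp_one Gp hval]
    simp only [hC]
    have hodd2 : Odd (p^(k+1)) := hodd.pow
    rw [hodd2.neg_one_pow]
    ring
  -- difference tends to zero
  have hdiffnorm : ∀ k : ℕ, ‖Gp ((m k : ℕ)) * Gp (((p^(k+1)+1-(m k) : ℕ)))
      - Gp (((p^(k+1) : ℕ) : ℚ_[p])) * Gp 1‖ ≤ (p:ℝ)^(-((k:ℤ))) := by
    intro k
    rw [hval1 k, hval2 k]
    have hdvd : ((p:ℤ)^(k+1)) ∣ ((A k * B k : ℕ) : ℤ) - ((C k : ℕ) : ℤ) := by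
      haveI : NeZero (p^(k+1)) := ⟨pow_ne_zero _ hf.out.ne_zero⟩
      have hz := key_cong p (p^(k+1)) (m k) hf.out hodd
        (dvd_pow_self p (Nat.succ_ne_zero k)) (hm0 k) (hmle k) (hpm k)
      have : ((((A k * B k : ℕ) : ℤ) - ((C k : ℕ) : ℤ) : ℤ) : ZMod (p^(k+1))) = 0 := by
        simp only [hA, hB, hC]
        push_cast
        push_cast at hz
        rw [hz]; ring
      have hd := (ZMod.intCast_zmod_eq_zero_iff_dvd _ _).mp this
      push_cast at hd
      exact hd
    have hnorm2 := (Padic.norm_int_le_pow_iff_dvd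
      (((A k * B k : ℕ) : ℤ) - ((C k : ℕ) : ℤ)) (k+1)).mpr hdvd
    have hcast : ((( ((A k * B k : ℕ) : ℤ) - ((C k : ℕ) : ℤ)) : ℤ) : ℚ_[p])
        = ((A k * B k : ℕ) : ℚ_[p]) - ((C k : ℕ) : ℚ_[p]) := by push_cast; ring
    rw [hcast] at hnorm2
    refine le_trans hnorm2 (zpow_le_zpow_right₀ hp1.le (by omega))
  have hdiff : Tendsto (fun k => Gp ((m k : ℕ)) * Gp (((p^(k+1)+1-(m k) : ℕ)))
      - Gp (((p^(k+1) : ℕ) : ℚ_[p])) * Gp 1) atTop (nhds 0) := by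
    rw [tendsto_iff_dist_tendsto_zero]
    refine squeeze_zero (fun k => dist_nonneg) (fun k => ?_) (tendsto_ppow p hf.out.one_lt)
    rw [dist_zero_right]
    exact hdiffnorm k
  have hfinal := hcseq.add hdiff
  simp only [add_sub_cancel] at hfinal
  exact tendsto_nhds_unique hb (by simpa using hfinal)

end


/-- For a prime `p ≥ 5`, `G₁(1)² = G₂(1)`, where `G_k(a) = Γ_p^{(k)}(a)/Γ_p(a)` for Morita's
`p`-adic Gamma function `Γ_p`. -/
theorem stmt16 (p : ℕ) [Fact p.Prime] (hp5 : 5 ≤ p)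
    (Gp : ℚ_[p] → ℚ_[p])
    (hval : ∀ n : ℕ, 0 < n →
      Gp (n : ℚ_[p]) = (-1) ^ n * ∏ i ∈ (Finset.Ico 1 n).filter (fun i => ¬ p ∣ i), (i : ℚ_[p]))
    (hsmooth : ∀ x : ℚ_[p], ‖x‖ ≤ 1 → ContDiffAt ℚ_[p] (⊤ : ℕ∞) Gp x) :
    (deriv Gp 1 / Gp 1) ^ 2 = iteratedDeriv 2 Gp 1 / Gp 1 := by
  have hf : Fact p.Prime := inferInstance
  have hp1 : (1:ℝ) < p := by exact_mod_cast hf.out.one_lt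
  have hodd : Odd p := hf.out.odd_of_ne_two (by omega)
  -- pointwise identities on the unit ball
  have hT0 : ∀ y : ℚ_[p], ‖y‖ < 1 → Gp (y+1) + Gp y = 0 := fun y hy => by
    rw [Gp_transl Gp hval hsmooth y hy]; ring
  have hR0 : ∀ y : ℚ_[p], ‖y‖ < 1 → Gp y * Gp (1-y) - Gp 0 * Gp 1 = 0 := fun y hy => by
    rw [Gp_refl Gp hval hsmooth hodd y hy]; ring
  -- differentiability setup
  set U : Set ℚ_[p] := Metric.ball 0 (p:ℝ) with hU
  have hUopen : IsOpen U := Metric.isOpen_ball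
  have hUmem : ∀ y : ℚ_[p], ‖y‖ < (p:ℝ) → y ∈ U := fun y hy => by
    simpa [hU, Metric.mem_ball, dist_zero_right] using hy
  have hUle1 : ∀ y ∈ U, ‖y‖ ≤ 1 := fun y hy =>
    stmt16_norm_le_one p y (by simpa [hU, Metric.mem_ball, dist_zero_right] using hy)
  have hCO : ContDiffOn ℚ_[p] (⊤ : ℕ∞) Gp U := fun y hy =>
    ((hsmooth y (hUle1 y hy)).of_le (mod_cast le_top)).contDiffWithinAt
  have hder : ContDiffOn ℚ_[p] (⊤ : ℕ∞) (deriv Gp) U :=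
    hCO.deriv_of_isOpen hUopen (by exact_mod_cast le_rfl)
  have hd1 : ∀ y ∈ U, HasDerivAt Gp (deriv Gp y) y := fun y hy =>
    ((hsmooth y (hUle1 y hy)).differentiableAt (by simp)).hasDerivAt
  have hd2 : ∀ y ∈ U, HasDerivAt (deriv Gp) (deriv (deriv Gp) y) y := fun y hy =>
    (((hder y hy).differentiableWithinAt (by simp)).differentiableAt
      (hUopen.mem_nhds hy)).hasDerivAt
  -- membership facts
  have hmem0 : ∀ y : ℚ_[p], ‖y‖ < 1 → y ∈ U := fun y hy => hUmem y (lt_trans hy hp1)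
  have hmem1 : ∀ y : ℚ_[p], ‖y‖ < 1 → y + 1 ∈ U := fun y hy => by
    refine hUmem _ (lt_of_le_of_lt ?_ hp1)
    exact le_trans (Padic.nonarchimedean _ _) (max_le hy.le (by simp))
  have hmem2 : ∀ y : ℚ_[p], ‖y‖ < 1 → 1 - y ∈ U := fun y hy => by
    refine hUmem _ (lt_of_le_of_lt ?_ hp1)
    calc ‖(1:ℚ_[p]) - y‖ = ‖(1:ℚ_[p]) + (-y)‖ := by rw [sub_eq_add_neg]
    _ ≤ max ‖(1:ℚ_[p])‖ ‖-y‖ := Padic.nonarchimedean _ _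
    _ ≤ 1 := max_le (by simp) (by simpa using hy.le)
  have hball : ∀ y : ℚ_[p], ‖y‖ < 1 → Metric.ball (0:ℚ_[p]) 1 ∈ nhds y := fun y hy =>
    Metric.isOpen_ball.mem_nhds (by simpa [Metric.mem_ball, dist_zero_right] using hy)
  -- a helper to kill derivatives of functions vanishing on the ball
  have hkill : ∀ (F : ℚ_[p] → ℚ_[p]) (d : ℚ_[p]) (y : ℚ_[p]), ‖y‖ < 1 →
      HasDerivAt F d y → (∀ z : ℚ_[p], ‖z‖ < 1 → F z = 0) → d = 0 := by
    intro F d y hy hF hF0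
    have heq : (fun _ : ℚ_[p] => (0:ℚ_[p])) =ᶠ[nhds y] F := by
      refine Filter.eventually_of_mem (hball y hy) (fun z hz => ?_)
      exact (hF0 z (by simpa [Metric.mem_ball, dist_zero_right] using hz)).symm
    have h2 : HasDerivAt (fun _ : ℚ_[p] => (0:ℚ_[p])) d y := hF.congr_of_eventuallyEq heq
    exact h2.unique (hasDerivAt_const y 0)
  -- first derivative of translation identity
  have hT1 : ∀ y : ℚ_[p], ‖y‖ < 1 → deriv Gp (y+1) + deriv Gp y = 0 := by
    intro y hy
    have hcomp : HasDerivAt (fun z : ℚ_[p] => Gp (z+1)) (deriv Gp (y+1)) y := by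
      have := (hd1 (y+1) (hmem1 y hy)).comp y ((hasDerivAt_id y).add_const 1)
      exact this.congr_deriv (by simp)
    have hsum : HasDerivAt (fun z : ℚ_[p] => Gp (z+1) + Gp z)
        (deriv Gp (y+1) + deriv Gp y) y := hcomp.add (hd1 y (hmem0 y hy))
    exact hkill _ _ y hy hsum hT0
  -- second derivative of translation identity
  have hT2 : deriv (deriv Gp) 1 + deriv (deriv Gp) 0 = 0 := by
    have h01 : ‖(0:ℚ_[p])‖ < 1 := by simp
    have hcomp : HasDerivAt (fun z : ℚ_[p] => deriv Gp (z+1)) (deriv (deriv Gp) 1) 0 := by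
      have := (hd2 (0+1) (hmem1 0 h01)).comp 0 ((hasDerivAt_id (0:ℚ_[p])).add_const 1)
      exact this.congr_deriv (by simp)
    have hsum : HasDerivAt (fun z : ℚ_[p] => deriv Gp (z+1) + deriv Gp z)
        (deriv (deriv Gp) 1 + deriv (deriv Gp) 0) 0 := by
      have h2 := hd2 0 (hmem0 0 h01)
      simpa [Pi.add_def] using hcomp.add h2
    exact hkill _ _ 0 h01 hsum hT1
  -- first derivative of reflection identity
  have hR1 : ∀ y : ℚ_[p], ‖y‖ < 1 →
      deriv Gp y * Gp (1-y) + Gp y * (deriv Gp (1-y) * (-1)) = 0 := by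
    intro y hy
    have hcomp : HasDerivAt (fun z : ℚ_[p] => Gp (1-z)) (deriv Gp (1-y) * (-1)) y := by
      have hlin : HasDerivAt (fun z : ℚ_[p] => 1 - z) (-1 : ℚ_[p]) y := by
        simpa using (hasDerivAt_id y).const_sub 1
      exact (hd1 (1-y) (hmem2 y hy)).comp y hlin
    have hprod : HasDerivAt (fun z : ℚ_[p] => Gp z * Gp (1-z) - Gp 0 * Gp 1)
        (deriv Gp y * Gp (1-y) + Gp y * (deriv Gp (1-y) * (-1))) y := by
      have := ((hd1 y (hmem0 y hy)).mul hcomp).sub_const (Gp 0 * Gp 1)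
      simpa using this
    exact hkill _ _ y hy hprod hR0
  -- second derivative of reflection identity
  have hR2 : deriv (deriv Gp) 0 * Gp 1 + deriv Gp 0 * (deriv Gp 1 * (-1))
      + (deriv Gp 0 * (deriv Gp 1 * (-1)) + Gp 0 * (deriv (deriv Gp) 1 * (-1) * (-1))) = 0 := by
    have h01 : ‖(0:ℚ_[p])‖ < 1 := by simp
    have hlin : HasDerivAt (fun z : ℚ_[p] => 1 - z) (-1 : ℚ_[p]) 0 := by
      simpa using (hasDerivAt_id (0:ℚ_[p])).const_sub 1
    have hcomp1 : HasDerivAt (fun z : ℚ_[p] => Gp (1-z)) (deriv Gp 1 * (-1)) 0 := by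
      have := (hd1 (1-0) (hmem2 0 h01)).comp 0 hlin
      simpa [Function.comp_def] using this
    have hcomp2 : HasDerivAt (fun z : ℚ_[p] => deriv Gp (1-z))
        (deriv (deriv Gp) 1 * (-1)) 0 := by
      have := (hd2 (1-0) (hmem2 0 h01)).comp 0 hlin
      simpa [Function.comp_def] using this
    have hsum : HasDerivAt
        (fun z : ℚ_[p] => deriv Gp z * Gp (1-z) + Gp z * (deriv Gp (1-z) * (-1)))
        (deriv (deriv Gp) 0 * Gp 1 + deriv Gp 0 * (deriv Gp 1 * (-1))
          + (deriv Gp 0 * (deriv Gp 1 * (-1)) + Gp 0 * (deriv (deriv Gp) 1 * (-1) * (-1)))) 0 := by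
      have hA := (hd2 0 (hmem0 0 h01)).mul hcomp1
      have hB := (hd1 0 (hmem0 0 h01)).mul (hcomp2.mul_const (-1))
      have := hA.add hB
      simpa [Pi.add_def, Pi.mul_def] using this
    exact hkill _ _ 0 h01 hsum hR1
  -- collect the scalar relations
  have hg1 : Gp 1 = -1 := Gp_one Gp hval
  have hg0 : Gp 0 = 1 := by
    have h01 : ‖(0:ℚ_[p])‖ < 1 := by simp
    have := hT0 0 h01
    rw [zero_add, hg1] at this
    linear_combination this
  have hb : deriv Gp 1 + deriv Gp 0 = 0 := by
    have h01 : ‖(0:ℚ_[p])‖ < 1 := by simp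
    have := hT1 0 h01
    rwa [zero_add] at this
  have hiter : iteratedDeriv 2 Gp 1 = deriv (deriv Gp) 1 := by
    rw [iteratedDeriv_succ, iteratedDeriv_one]
  set a := deriv Gp 0
  set b := deriv Gp 1
  set A := deriv (deriv Gp) 0
  set B := deriv (deriv Gp) 1
  rw [hiter, hg1]
  rw [hg1, hg0] at hR2
  -- from hR2 : A * (-1) + a * (b * -1) + (a * (b * -1) + 1 * (B * -1 * -1)) = 0
  -- hT2 : B + A = 0, hb : b + a = 0
  have hBA : B = -A := by linear_combination hT2
  have hba : b = -a := by linear_combination hb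
  have hAa : A = a * a := by
    linear_combination (-1/2 : ℚ_[p]) * hR2 + (1/2 : ℚ_[p]) * hT2 + (-a) * hb
  rw [hBA, hba, hAa]
  ring
end

section
/- Let p be a prime, 0 ≤ a ≤ p-1 an integer, and t ∈ ℤ_p. Then the rising factorial satisfies (t)_a = (-1)^a · (Γ_p(t+a)/Γ_p(t)) · (t + [-t]_0)^{ν(a, [-t]_0)}, where ν(a,x) = 0 if a ≤ x and ν(a,x) = 1 if x < a ≤ p-1. -/
open Finset

lemma risingFact_natCast {R : Type*} [CommRing R] (n a : ℕ) :
    risingFact (n : R) a = ∏ i ∈ Ico n (n + a), (i : R) := by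
  simp [risingFact, prod_Ico_eq_prod_range]

namespace Nat

lemma eq_of_dvd_of_dvd_of_lt_add {p i j : ℕ} (hi : p ∣ i) (hj : p ∣ j) (hij : i < j + p)
    (hji : j < i + p) : i = j := by
  have hdvd : (p : ℤ) ∣ (i : ℤ) - j :=
    (Int.natCast_dvd_natCast.2 hi).sub (Int.natCast_dvd_natCast.2 hj)
  have := Int.eq_zero_of_abs_lt_dvd hdvd (by rw [abs_sub_lt_iff]; omega)
  omega

lemma filter_dvd_Ico_add {p n r a : ℕ} (hr : r < p) (hdvd : p ∣ n + r) (ha : a ≤ p) :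
    (Ico n (n + a)).filter (p ∣ ·) = if r < a then {n + r} else ∅ := by
  ext i
  simp only [mem_filter, mem_Ico]
  constructor
  · rintro ⟨⟨hni, hia⟩, hi⟩
    have hieq := eq_of_dvd_of_dvd_of_lt_add hi hdvd (by omega) (by omega)
    rw [if_pos (by omega), mem_singleton]
    exact hieq
  · split_ifs with hra
    · rw [mem_singleton]
      rintro rfl
      exact ⟨by omega, hdvd⟩
    · simp

end Nat

lemma prod_Ico_add_natCast_eq {R : Type*} [CommSemiring R] {p n r a : ℕ} (hr : r < p)
    (hdvd : p ∣ n + r) (ha : a ≤ p) :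
    ∏ i ∈ Ico n (n + a), (i : R) =
      (∏ i ∈ (Ico n (n + a)).filter (¬ p ∣ ·), (i : R)) * if r < a then (n : R) + r else 1 := by
  rw [← prod_filter_not_mul_prod_filter _ (p ∣ ·), Nat.filter_dvd_Ico_add hr hdvd ha]
  split_ifs <;> simp

lemma prod_Ico_add_mul_signed_prod_coprime {R : Type*} [CommRing R] {p n r a : ℕ} (hn : 0 < n)
    (hr : r < p) (hdvd : p ∣ n + r) (ha : a ≤ p) :
    (∏ i ∈ Ico n (n + a), (i : R)) * ((-1) ^ n * ∏ i ∈ (Ico 1 n).filter (¬ p ∣ ·), (i : R)) =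
      (-1) ^ a * ((-1) ^ (n + a) * ∏ i ∈ (Ico 1 (n + a)).filter (¬ p ∣ ·), (i : R)) *
        if r < a then (n : R) + r else 1 := by
  have hsplit : ∏ i ∈ (Ico 1 (n + a)).filter (¬ p ∣ ·), (i : R) =
      (∏ i ∈ (Ico 1 n).filter (¬ p ∣ ·), (i : R)) *
        ∏ i ∈ (Ico n (n + a)).filter (¬ p ∣ ·), (i : R) := by
    simp only [prod_filter]
    exact (prod_Ico_consecutive _ hn (Nat.le_add_right n a)).symm
  have hsign : (-1 : R) ^ a * (-1) ^ (n + a) = (-1) ^ n := by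
    rw [pow_add, mul_left_comm, ← mul_pow, neg_one_mul, neg_neg, one_pow, mul_one]
  rw [hsplit, prod_Ico_add_natCast_eq hr hdvd ha, ← mul_assoc ((-1 : R) ^ a), hsign]
  ring

namespace PadicInt

variable {p : ℕ} [Fact p.Prime]

lemma appr_eq_of_sub_mem_span {x y : ℤ_[p]} {n : ℕ}
    (h : x - y ∈ Ideal.span {(p : ℤ_[p]) ^ n}) : x.appr n = y.appr n := by
  have hxy : toZModPow n x = toZModPow n y := by
    rwa [← sub_eq_zero, ← map_sub, ← RingHom.mem_ker, ker_toZModPow]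
  have hval (z : ℤ_[p]) : (toZModPow n z).val = z.appr n :=
    ZMod.val_natCast_of_lt (z.appr_lt n)
  rw [← hval, ← hval, hxy]

lemma continuous_appr (n : ℕ) : Continuous fun x : ℤ_[p] => x.appr n := by
  refine (IsLocallyConstant.iff_eventually_eq _).2 (fun x => ?_) |>.continuous
  have hp : (0 : ℝ) < p := Nat.cast_pos.2 (Fact.out : p.Prime).pos
  filter_upwards [Metric.closedBall_mem_nhds x (zpow_pos hp (-n))] with y hy
  rw [Metric.mem_closedBall, dist_eq_norm, norm_le_pow_iff_mem_span_pow] at hy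
  exact appr_eq_of_sub_mem_span hy

lemma dvd_natCast_add_appr_neg (m : ℕ) : p ∣ m + (-(m : ℤ_[p])).appr 1 := by
  have h := appr_spec 1 (-(m : ℤ_[p]))
  rw [pow_one, Ideal.mem_span_singleton] at h
  have hcast : ((m + (-(m : ℤ_[p])).appr 1 : ℕ) : ℤ_[p]) =
      -(-(m : ℤ_[p]) - (-(m : ℤ_[p])).appr 1) := by
    push_cast
    ring
  rw [← norm_natCast_lt_one_iff (p := p), hcast, norm_neg, norm_lt_one_iff_dvd]
  exact h

lemma denseRange_natCast_add_one : DenseRange fun n : ℕ => (n : ℤ_[p]) + 1 :=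
  (add_right_surjective 1).denseRange.comp denseRange_natCast (continuous_add_const 1)

end PadicInt

/-- Let `p` be a prime, `0 ≤ a ≤ p-1`, and `t ∈ ℤ_p`.  Then the rising factorial satisfies
`(t)_a = (-1)^a · (Γ_p(t+a)/Γ_p(t)) · (t + [-t]₀)^{ν(a, [-t]₀)}` where `ν(a,x) = 1` if `x < a`
and `0` otherwise.  (Stated multiplied out in `ℤ_p`.) -/
theorem stmt17 (p : ℕ) [Fact p.Prime]
    (Gp : ℤ_[p] → ℤ_[p]) (hcont : Continuous Gp)
    (hval : ∀ n : ℕ, 0 < n →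
      Gp (n : ℤ_[p]) = (-1) ^ n * ∏ i ∈ (Finset.Ico 1 n).filter (fun i => ¬ p ∣ i), (i : ℤ_[p]))
    (a : ℕ) (haa : a ≤ p - 1) (t : ℤ_[p]) :
    risingFact t a * Gp t =
      (-1) ^ a * Gp (t + (a : ℤ_[p])) *
        (if (-t).appr 1 < a then t + (((-t).appr 1 : ℕ) : ℤ_[p]) else 1) := by
  have hcorr : Continuous fun t : ℤ_[p] =>
      if (-t).appr 1 < a then t + (((-t).appr 1 : ℕ) : ℤ_[p]) else 1 := by
    have hg : Continuous fun q : ℤ_[p] × ℕ => if q.2 < a then q.1 + q.2 else 1 :=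
      continuous_prod_of_discrete_right.2 fun k => by dsimp only; split_ifs <;> fun_prop
    exact hg.comp (continuous_id.prodMk ((PadicInt.continuous_appr 1).comp continuous_neg))
  have hlhs : Continuous fun t : ℤ_[p] => risingFact t a * Gp t :=
    (continuous_finsetProd _ fun i _ => by fun_prop).mul hcont
  refine PadicInt.denseRange_natCast_add_one.induction_on t (isClosed_eq hlhs ?_) fun n => ?_
  · exact (continuous_const.mul (hcont.comp (continuous_add_const _))).mul hcorr
  have hr := (-((n + 1 : ℕ) : ℤ_[p])).appr_lt 1
  rw [pow_one] at hr
  rw [← Nat.cast_succ, risingFact_natCast, hval _ n.succ_pos, ← Nat.cast_add, hval _ (by omega)]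
  exact prod_Ico_add_mul_signed_prod_coprime n.succ_pos hr
    (PadicInt.dvd_natCast_add_appr_neg _) (by omega)
end
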